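/- arXiv:2404.00310 — 15 statements merged into one kernel-verified Lean document; each statement's English description precedes it below -/
import Mathlib

section
/- Let τ be a nonempty index set, φ : τ → τ a self-map, and w : τ → ℂ a weight vector. Then the weighted generalized shift σ_{φ,w} maps ℓ²(τ) into ℓ²(τ) if and only if sup { (Σ_{α ∈ φ⁻¹(β)} |w_α|²)^{1/2} : β ∈ range φ } < +∞. -/
open scoped ENNReal NNReal

private lemma mem2_iff {τ : Type*} (f : τ → ℂ) :
    Memℓp f 2 ↔ (∑' α, ((‖f α‖₊ : ℝ≥0∞)) ^ 2) ≠ ⊤ := by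
  set g : τ → ℝ≥0 := fun α => ‖f α‖₊ ^ 2 with hg
  rw [memℓp_gen_iff (by norm_num : (0:ℝ) < (2:ℝ≥0∞).toReal)]
  have h : (fun α => ‖f α‖ ^ (2:ℝ≥0∞).toReal) = fun α => ((g α : ℝ)) := by
    funext α
    have h2 : (2:ℝ≥0∞).toReal = ((2:ℕ):ℝ) := by norm_num
    rw [h2, Real.rpow_natCast, hg]
    push_cast
    simp
  have h' : ∀ α, ((‖f α‖₊ : ℝ≥0∞)) ^ 2 = ((g α : ℝ≥0∞)) := by
    intro α; rw [hg]; push_cast; ring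
  rw [h, NNReal.summable_coe, ← ENNReal.tsum_coe_ne_top_iff_summable]
  simp_rw [h']

/-- The weighted generalized shift `σ_{φ,w}` maps `ℓ²(τ)` into `ℓ²(τ)`
if and only if `sup { (Σ_{α ∈ φ⁻¹(β)} |w_α|²)^{1/2} : β ∈ range φ } < +∞`. -/
theorem weighted_shift_maps_l2_iff {τ : Type*} [Nonempty τ] (φ : τ → τ) (w : τ → ℂ) :
    (∀ x : τ → ℂ, Memℓp x 2 → Memℓp (fun α => w α * x (φ α)) 2) ↔
      (⨆ β ∈ Set.range φ, (∑' α : (φ ⁻¹' {β}), ((‖w (α : τ)‖₊ : ℝ≥0∞)) ^ 2) ^ (1/2 : ℝ)) < ⊤ := by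
  classical
  set S : τ → ℝ≥0∞ := fun β => ∑' α : (φ ⁻¹' {β}), ((‖w (α : τ)‖₊ : ℝ≥0∞)) ^ 2 with hS
  have hSzero : ∀ β, β ∉ Set.range φ → S β = 0 := by
    intro β hβ
    haveI : IsEmpty (φ ⁻¹' {β}) := by
      rw [Set.isEmpty_coe_sort]
      rcases Set.eq_empty_or_nonempty (φ ⁻¹' {β}) with h | ⟨α, hα⟩
      · exact h
      · exact absurd ⟨α, hα⟩ hβ
    exact tsum_empty
  have key : ∀ x : τ → ℂ,
      (∑' α, ((‖w α * x (φ α)‖₊ : ℝ≥0∞)) ^ 2) = ∑' β, S β * ((‖x β‖₊ : ℝ≥0∞)) ^ 2 := by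
    intro x
    rw [← ENNReal.tsum_fiberwise (fun α => ((‖w α * x (φ α)‖₊ : ℝ≥0∞)) ^ 2) φ]
    refine tsum_congr fun γ => ?_
    have h1 : ∀ α : φ ⁻¹' {γ}, ((‖w (α:τ) * x (φ (α:τ))‖₊ : ℝ≥0∞)) ^ 2
        = ((‖w (α:τ)‖₊ : ℝ≥0∞)) ^ 2 * ((‖x γ‖₊ : ℝ≥0∞)) ^ 2 := by
      rintro ⟨α, hα⟩
      have hφ : φ α = γ := hα
      simp only [hφ, nnnorm_mul, ENNReal.coe_mul, mul_pow]
    rw [tsum_congr h1, ENNReal.tsum_mul_right]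
  constructor
  · intro hmap
    by_contra htop
    have hsup : (⨆ β ∈ Set.range φ, (S β) ^ (1/2 : ℝ)) = ⊤ := top_le_iff.mp (not_lt.mp htop)
    by_cases hA : ∃ β ∈ Set.range φ, S β = ⊤
    · -- case A : some fiber sum infinite
      obtain ⟨β, -, hSβ⟩ := hA
      set x : τ → ℂ := fun γ => if γ = β then 1 else 0 with hx
      have hxmem : Memℓp x 2 := by
        rw [mem2_iff]
        have : (∑' γ, ((‖x γ‖₊ : ℝ≥0∞)) ^ 2) = ((‖x β‖₊ : ℝ≥0∞)) ^ 2 := by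
          refine tsum_eq_single β fun γ hγ => ?_
          simp [hx, hγ]
        rw [this]
        simp [hx]
      have := (mem2_iff _).mp (hmap x hxmem)
      rw [key x] at this
      refine this (top_le_iff.mp ?_)
      calc (⊤:ℝ≥0∞) = S β * ((‖x β‖₊ : ℝ≥0∞)) ^ 2 := by simp [hx, hSβ]
        _ ≤ _ := ENNReal.le_tsum β
    · -- case B : all fibers finite but unbounded
      push_neg at hA
      have hfin : ∀ γ, S γ ≠ ⊤ := by
        intro γ
        by_cases hγ : γ ∈ Set.range φ
        · exact hA γ hγ
        · rw [hSzero γ hγ]; exact ENNReal.zero_ne_top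
      -- get β n with 4^n < S (β n)
      have hpick : ∀ n : ℕ, ∃ γ, γ ∈ Set.range φ ∧ (4:ℝ≥0∞) ^ n < S γ := by
        intro n
        by_contra hcon
        push_neg at hcon
        have hb : (⨆ β ∈ Set.range φ, (S β) ^ (1/2 : ℝ)) ≤ ((4:ℝ≥0∞) ^ n) ^ (1/2 : ℝ) := by
          refine iSup₂_le fun γ hγ => ?_
          exact ENNReal.rpow_le_rpow (hcon γ hγ) (by norm_num)
        rw [hsup] at hb
        have : ((4:ℝ≥0∞) ^ n) ^ (1/2 : ℝ) < ⊤ :=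
          ENNReal.rpow_lt_top_of_nonneg (by norm_num)
            (ENNReal.pow_ne_top (by norm_num))
        exact this.ne (top_le_iff.mp hb)
      choose β hβmem hβbig using hpick
      -- the chosen indices take infinitely many values
      have hrange : (Set.range β).Infinite := by
        intro hfinR
        haveI : Finite (Set.range β) := hfinR
        obtain ⟨⟨γ, hγ⟩, hfib⟩ :=
          Finite.exists_infinite_fiber (Set.rangeFactorization β)
        have hsets : Set.rangeFactorization β ⁻¹' {⟨γ, hγ⟩} = {n : ℕ | β n = γ} := by
          ext n
          simp [Set.rangeFactorization, Subtype.ext_iff]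
        have hfib' : {n : ℕ | β n = γ}.Infinite := by
          rw [← Set.infinite_coe_iff, ← hsets]
          exact hfib
        obtain ⟨m, hm⟩ := ENNReal.exists_nat_gt (hfin γ)
        obtain ⟨n, hn, hmn⟩ := hfib'.exists_gt m
        have h1 : (4:ℝ≥0∞) ^ n < S γ := by
          have := hβbig n
          rwa [hn] at this
        have h2 : S γ ≤ (4:ℝ≥0∞) ^ n := by
          calc S γ ≤ (m:ℝ≥0∞) := hm.le
            _ ≤ ((4 ^ m : ℕ) : ℝ≥0∞) := by
                exact_mod_cast Nat.le_of_lt (Nat.lt_pow_self (n := m) (a := 4) (by norm_num))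
            _ = (4:ℝ≥0∞) ^ m := by push_cast; ring
            _ ≤ (4:ℝ≥0∞) ^ n := pow_le_pow_right₀ (by norm_num) hmn.le
        exact absurd h1 (not_lt.mpr h2)
      -- define the counterexample x
      set x : τ → ℂ := fun γ => if h : ∃ n, β n = γ then ((2:ℂ) ^ (Nat.find h))⁻¹ else 0
        with hx
      have hxval : ∀ γ (h : ∃ n, β n = γ),
          ((‖x γ‖₊ : ℝ≥0∞)) ^ 2 = (((4:ℝ≥0∞) ^ (Nat.find h))⁻¹) := by
        intro γ h
        rw [hx]
        simp only [dif_pos h]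
        rw [nnnorm_inv, nnnorm_pow]
        have : ‖(2:ℂ)‖₊ = 2 := by
          simp
        rw [this]
        rw [ENNReal.coe_inv (by positivity), ENNReal.coe_pow]
        rw [show ((2:ℝ≥0):ℝ≥0∞) = (2:ℝ≥0∞) by norm_num]
        rw [ENNReal.inv_pow, ENNReal.inv_pow, ← pow_mul, mul_comm (Nat.find h) 2, pow_mul]
        congr 1
        rw [← ENNReal.inv_pow]
        norm_num
      have hxzero : ∀ γ, (¬ ∃ n, β n = γ) → x γ = 0 := by
        intro γ h; rw [hx]; simp only [dif_neg h]
      have hxmem : Memℓp x 2 := by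
        rw [mem2_iff]
        have hsupp : Function.support (fun γ => ((‖x γ‖₊ : ℝ≥0∞)) ^ 2) ⊆ Set.range β := by
          intro γ hγ
          by_contra hc
          have : ¬ ∃ n, β n = γ := by simpa [Set.mem_range] using hc
          simp [hxzero γ this] at hγ
        have heq : (∑' γ : Set.range β, ((‖x (γ:τ)‖₊ : ℝ≥0∞)) ^ 2)
            = ∑' γ, ((‖x γ‖₊ : ℝ≥0∞)) ^ 2 := tsum_subtype_eq_of_support_subset hsupp
        rw [← heq]
        -- bound by geometric series via the injection γ ↦ Nat.find
        have hinj : Function.Injective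
            (fun γ : Set.range β => Nat.find (γ.2 : ∃ n, β n = (γ:τ))) := by
          intro a b hab
          have ha := Nat.find_spec (a.2 : ∃ n, β n = (a:τ))
          have hb := Nat.find_spec (b.2 : ∃ n, β n = (b:τ))
          have hab' : Nat.find (a.2 : ∃ n, β n = (a:τ))
              = Nat.find (b.2 : ∃ n, β n = (b:τ)) := hab
          apply Subtype.ext
          rw [← ha, ← hb, hab']
        have hle : (∑' γ : Set.range β, ((‖x (γ:τ)‖₊ : ℝ≥0∞)) ^ 2)
            ≤ ∑' n : ℕ, ((4:ℝ≥0∞) ^ n)⁻¹ := by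
          have := ENNReal.tsum_comp_le_tsum_of_injective hinj
            (fun n : ℕ => ((4:ℝ≥0∞) ^ n)⁻¹)
          refine le_trans (le_of_eq ?_) this
          refine tsum_congr fun γ => ?_
          exact hxval (γ:τ) γ.2
        have hgeom : (∑' n : ℕ, ((4:ℝ≥0∞) ^ n)⁻¹) ≠ ⊤ := by
          have : (∑' n : ℕ, ((4:ℝ≥0∞) ^ n)⁻¹) = ∑' n : ℕ, ((4:ℝ≥0∞)⁻¹) ^ n := by
            refine tsum_congr fun n => ?_
            rw [ENNReal.inv_pow]
          have h41 : (4:ℝ≥0∞)⁻¹ < 1 := ENNReal.inv_lt_one.mpr (by norm_num)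
          rw [this, ENNReal.tsum_geometric]
          exact ENNReal.inv_ne_top.mpr (tsub_pos_iff_lt.mpr h41).ne'
        exact fun h => hgeom (top_le_iff.mp (h ▸ hle))
      have := (mem2_iff _).mp (hmap x hxmem)
      rw [key x] at this
      apply this
      -- lower bound : sum is ⊤
      have hone : ∀ γ : Set.range β, (1:ℝ≥0∞) ≤ S (γ:τ) * ((‖x (γ:τ)‖₊ : ℝ≥0∞)) ^ 2 := by
        rintro ⟨γ, hγ⟩
        have h : ∃ n, β n = γ := hγ
        have hfind := Nat.find_spec h
        have hbig : (4:ℝ≥0∞) ^ (Nat.find h) < S γ := by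
          have := hβbig (Nat.find h); rwa [hfind] at this
        rw [hxval γ h]
        calc (1:ℝ≥0∞) = (4:ℝ≥0∞) ^ (Nat.find h) * ((4:ℝ≥0∞) ^ (Nat.find h))⁻¹ := by
              rw [ENNReal.mul_inv_cancel (by positivity) (ENNReal.pow_ne_top (by norm_num))]
          _ ≤ S γ * ((4:ℝ≥0∞) ^ (Nat.find h))⁻¹ := mul_le_mul_left hbig.le _
      haveI : Infinite (Set.range β) := Set.infinite_coe_iff.mpr hrange
      have h1 : (⊤:ℝ≥0∞) = ∑' _γ : Set.range β, (1:ℝ≥0∞) :=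
        (ENNReal.tsum_const_eq_top_of_ne_zero one_ne_zero).symm
      refine top_le_iff.mp ?_
      calc (⊤:ℝ≥0∞) = ∑' _γ : Set.range β, (1:ℝ≥0∞) := h1
        _ ≤ ∑' γ : Set.range β, S (γ:τ) * ((‖x (γ:τ)‖₊ : ℝ≥0∞)) ^ 2 :=
            ENNReal.tsum_le_tsum hone
        _ ≤ ∑' γ, S γ * ((‖x γ‖₊ : ℝ≥0∞)) ^ 2 :=
            ENNReal.tsum_comp_le_tsum_of_injective Subtype.coe_injective _
  · -- easy direction
    intro hfin x hx
    set M : ℝ≥0∞ := ⨆ β ∈ Set.range φ, (S β) ^ (1/2 : ℝ) with hM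
    have hbound : ∀ γ, S γ ≤ M ^ (2:ℝ) := by
      intro γ
      by_cases hγ : γ ∈ Set.range φ
      · calc S γ = ((S γ) ^ (1/2:ℝ)) ^ (2:ℝ) := by
              rw [← ENNReal.rpow_mul]
              norm_num [ENNReal.rpow_one]
          _ ≤ M ^ (2:ℝ) := ENNReal.rpow_le_rpow (le_iSup₂ (f := fun β _ => (S β) ^ (1/2:ℝ)) γ hγ) (by norm_num)
      · rw [hSzero γ hγ]; exact zero_le
    rw [mem2_iff] at hx ⊢
    rw [key x]
    have hle : (∑' γ, S γ * ((‖x γ‖₊ : ℝ≥0∞)) ^ 2)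
        ≤ M ^ (2:ℝ) * ∑' γ, ((‖x γ‖₊ : ℝ≥0∞)) ^ 2 := by
      rw [← ENNReal.tsum_mul_left]
      exact ENNReal.tsum_le_tsum fun γ => mul_le_mul_left (hbound γ) _
    have hMfin : M ^ (2:ℝ) ≠ ⊤ :=
      (ENNReal.rpow_lt_top_of_nonneg (by norm_num) hfin.ne).ne
    exact fun h => (ENNReal.mul_lt_top hMfin.lt_top hx.lt_top).ne (top_le_iff.mp (h ▸ hle))
end

section
/- Let τ be a nonempty index set, φ : τ → τ a self-map, and w : τ → ℂ a weight vector. If the weighted generalized shift σ_{φ,w} maps ℓ²(τ) into ℓ²(τ), then its restriction σ_{φ,w}|_{ℓ²(τ)} : ℓ²(τ) → ℓ²(τ) is a continuous (bounded) linear operator. -/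
/-!
By the closed graph theorem it suffices that the graph of the shift is closed in `ℓ² × ℓ²`.
Coordinate evaluations are continuous on `ℓ²`, and so is each coordinate `x ↦ w α * x (φ α)` of
the shift, so the graph `⋂ α, {(x, y) | y α = w α * x (φ α)}` is closed.
-/

theorem LinearMap.continuous_of_continuous_lp_apply {𝕜 E ι : Type*} {F : ι → Type*}
    [NontriviallyNormedField 𝕜] [NormedAddCommGroup E] [NormedSpace 𝕜 E] [CompleteSpace E]
    [∀ i, NormedAddCommGroup (F i)] [∀ i, NormedSpace 𝕜 (F i)] [∀ i, CompleteSpace (F i)]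
    {p : ENNReal} [Fact (1 ≤ p)] (L : E →ₗ[𝕜] lp F p)
    (hL : ∀ i, Continuous fun x => L x i) : Continuous L := by
  refine L.continuous_of_isClosed_graph ?_
  have hgraph : (L.graph : Set (E × lp F p)) = ⋂ i, {q | q.2 i = L q.1 i} := by
    ext ⟨x, y⟩
    simp only [SetLike.mem_coe, LinearMap.mem_graph_iff, Set.mem_iInter, Set.mem_ofPred_eq]
    exact ⟨fun h i => h ▸ rfl, fun h => lp.ext (funext h)⟩
  rw [hgraph]
  exact isClosed_iInter fun i =>
    isClosed_eq ((lp.evalCLM 𝕜 F p i).continuous.comp continuous_snd) ((hL i).comp continuous_fst)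

def weightedShiftₗ {𝕜 τ : Type*} [NormedField 𝕜] (p : ENNReal) (φ : τ → τ) (w : τ → 𝕜)
    (h : ∀ x : τ → 𝕜, Memℓp x p → Memℓp (fun α => w α * x (φ α)) p) :
    lp (fun _ : τ => 𝕜) p →ₗ[𝕜] lp (fun _ : τ => 𝕜) p where
  toFun x := ⟨fun α => w α * x (φ α), h x (lp.memℓp x)⟩
  map_add' x y := lp.ext <| funext fun α => mul_add (w α) (x (φ α)) (y (φ α))
  map_smul' c x := lp.ext <| funext fun α => mul_left_comm (w α) c (x (φ α))

theorem continuous_weightedShiftₗ {𝕜 τ : Type*} [NontriviallyNormedField 𝕜] [CompleteSpace 𝕜]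
    (p : ENNReal) [Fact (1 ≤ p)] (φ : τ → τ) (w : τ → 𝕜)
    (h : ∀ x : τ → 𝕜, Memℓp x p → Memℓp (fun α => w α * x (φ α)) p) :
    Continuous (weightedShiftₗ p φ w h) :=
  (weightedShiftₗ p φ w h).continuous_of_continuous_lp_apply fun α =>
    continuous_const.mul (lp.evalCLM 𝕜 (fun _ : τ => 𝕜) p (φ α)).continuous

theorem weighted_shift_restriction_continuous_general {τ : Type*} (φ : τ → τ) (w : τ → ℂ)
    (h : ∀ x : τ → ℂ, Memℓp x 2 → Memℓp (fun α => w α * x (φ α)) 2) :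
    ∃ T : lp (fun _ : τ => ℂ) 2 →L[ℂ] lp (fun _ : τ => ℂ) 2,
      ∀ (x : lp (fun _ : τ => ℂ) 2) (α : τ), T x α = w α * x (φ α) :=
  ⟨⟨weightedShiftₗ 2 φ w h, continuous_weightedShiftₗ 2 φ w h⟩, fun _ _ => rfl⟩

/-- If the weighted generalized shift `σ_{φ,w}` maps `ℓ²(τ)` into `ℓ²(τ)`,
then its restriction to `ℓ²(τ)` is a continuous (bounded) linear operator. -/
theorem weighted_shift_restriction_continuous {τ : Type*} [Nonempty τ] (φ : τ → τ) (w : τ → ℂ)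
    (h : ∀ x : τ → ℂ, Memℓp x 2 → Memℓp (fun α => w α * x (φ α)) 2) :
    ∃ T : lp (fun _ : τ => ℂ) 2 →L[ℂ] lp (fun _ : τ => ℂ) 2,
      ∀ (x : lp (fun _ : τ => ℂ) 2) (α : τ), T x α = w α * x (φ α) :=
  weighted_shift_restriction_continuous_general φ w h
end

section
/- Let τ be a nonempty index set, φ : τ → τ a self-map, and w : τ → ℂ a weight vector such that σ_{φ,w} maps ℓ²(τ) into ℓ²(τ). Then the operator norm of the restriction satisfies ‖σ_{φ,w}|_{ℓ²(τ)}‖ = sup { (Σ_{α ∈ φ⁻¹(β)} |w_α|²)^{1/2} : β ∈ range φ }. -/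
private lemma ws_hp : (0:ℝ) < (2 : ENNReal).toReal := by norm_num

private lemma ws_rpow_two (x : ℝ) : x ^ (2 : ℝ) = x ^ 2 := by
  rw [show (2:ℝ) = ((2:ℕ):ℝ) by norm_num, Real.rpow_natCast]

private lemma ws_sq_of_half (x : ℝ) (hx : 0 ≤ x) : (x ^ (1/2 : ℝ)) ^ 2 = x := by
  rw [← Real.rpow_natCast (x ^ (1/2:ℝ)) 2, ← Real.rpow_mul hx]
  norm_num

/-- The operator norm of the restriction of the weighted generalized shift
`σ_{φ,w}` to `ℓ²(τ)` equals `sup { (Σ_{α ∈ φ⁻¹(β)} |w_α|²)^{1/2} : β ∈ range φ }`. -/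
theorem weighted_shift_opNorm {τ : Type*} [Nonempty τ] (φ : τ → τ) (w : τ → ℂ)
    (T : lp (fun _ : τ => ℂ) 2 →L[ℂ] lp (fun _ : τ => ℂ) 2)
    (hT : ∀ (x : lp (fun _ : τ => ℂ) 2) (α : τ), T x α = w α * x (φ α)) :
    ‖T‖ = sSup {r : ℝ | ∃ β ∈ Set.range φ,
      r = (∑' α : (φ ⁻¹' {β}), ‖w (α : τ)‖ ^ 2) ^ (1/2 : ℝ)} := by
  classical
  set S := {r : ℝ | ∃ β ∈ Set.range φ,
      r = (∑' α : (φ ⁻¹' {β}), ‖w (α : τ)‖ ^ 2) ^ (1/2 : ℝ)} with hS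
  set f : τ → ℝ := fun β => ∑' α : (φ ⁻¹' {β}), ‖w (α : τ)‖ ^ 2 with hf
  have hf0 : ∀ β, 0 ≤ f β := fun β => tsum_nonneg fun a => by positivity
  -- norm of image of a basis vector
  have key1 : ∀ β : τ, ‖T (lp.single 2 β (1:ℂ))‖ = f β ^ (1/2 : ℝ) := by
    intro β
    rw [lp.norm_eq_tsum_rpow ws_hp]
    congr 1
    have : ∀ α : τ, ‖(T (lp.single 2 β (1:ℂ))) α‖ ^ ((2:ENNReal).toReal)
        = (φ ⁻¹' {β}).indicator (fun a => ‖w a‖ ^ 2) α := by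
      intro α
      rw [hT]
      by_cases h : φ α = β
      · rw [Set.indicator_of_mem (by simpa using h)]
        rw [show (lp.single 2 β (1:ℂ) : lp (fun _ : τ => ℂ) 2) (φ α) = 1 by
          rw [h]; exact lp.single_apply_self 2 β 1]
        simp [ws_rpow_two]
      · rw [Set.indicator_of_notMem (by simpa using h)]
        rw [lp.single_apply_ne 2 β _ h]
        simp [Real.zero_rpow (by norm_num : ((2:ENNReal).toReal) ≠ 0)]
    rw [tsum_congr this, ← tsum_subtype]
  have hsingle_norm : ∀ β : τ, ‖(lp.single 2 β (1:ℂ) : lp (fun _ : τ => ℂ) 2)‖ = 1 := by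
    intro β
    simpa using lp.norm_single (E := fun _ : τ => ℂ) ws_hp (fun _ => (1:ℂ)) β
  -- every element of S is ≤ ‖T‖
  have hSle : ∀ r ∈ S, r ≤ ‖T‖ := by
    rintro r ⟨β, hβ, rfl⟩
    calc f β ^ (1/2:ℝ) = ‖T (lp.single 2 β (1:ℂ))‖ := (key1 β).symm
      _ ≤ ‖T‖ * ‖(lp.single 2 β (1:ℂ) : lp (fun _ : τ => ℂ) 2)‖ := T.le_opNorm _
      _ = ‖T‖ := by rw [hsingle_norm]; ring
  have hSne : S.Nonempty := by
    refine ⟨f (φ (Classical.arbitrary τ)) ^ (1/2:ℝ), φ (Classical.arbitrary τ),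
      ⟨Classical.arbitrary τ, rfl⟩, rfl⟩
  have hSbdd : BddAbove S := ⟨‖T‖, fun r hr => hSle r hr⟩
  set M := sSup S with hM
  have hM0 : 0 ≤ M := by
    obtain ⟨r, hr⟩ := hSne
    refine le_trans ?_ (le_csSup hSbdd hr)
    obtain ⟨β, hβ, rfl⟩ := hr
    exact Real.rpow_nonneg (hf0 β) _
  refine le_antisymm ?_ (csSup_le hSne hSle)
  -- key upper bound
  refine T.opNorm_le_bound hM0 fun x => ?_
  have hfib_le : ∀ β : τ, f β ≤ M ^ 2 := by
    intro β
    by_cases hβ : β ∈ Set.range φ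
    · have hmem : f β ^ (1/2:ℝ) ∈ S := ⟨β, hβ, rfl⟩
      have h1 : f β ^ (1/2:ℝ) ≤ M := le_csSup hSbdd hmem
      calc f β = (f β ^ (1/2:ℝ)) ^ 2 := (ws_sq_of_half _ (hf0 β)).symm
        _ ≤ M ^ 2 := by
            have := Real.rpow_nonneg (hf0 β) (1/2:ℝ)
            nlinarith
    · have : IsEmpty (φ ⁻¹' {β} : Set τ) := by
        refine ⟨fun a => hβ ⟨(a:τ), ?_⟩⟩
        exact a.2
      have : f β = 0 := tsum_empty
      rw [this]; positivity
  -- summability of coordinates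
  have hsum : Summable fun α => ‖(T x) α‖ ^ ((2:ENNReal).toReal) :=
    (memℓp_gen_iff ws_hp).1 (lp.memℓp (T x))
  have hfiber : HasSum (fun β : τ => ∑' a : (φ ⁻¹' {β}), ‖(T x) (a:τ)‖ ^ ((2:ENNReal).toReal))
      (∑' α, ‖(T x) α‖ ^ ((2:ENNReal).toReal)) := hsum.hasSum.tsum_fiberwise φ
  -- value of fiber sums
  have hfib_val : ∀ β : τ, (∑' a : (φ ⁻¹' {β}), ‖(T x) (a:τ)‖ ^ ((2:ENNReal).toReal))
      = f β * ‖x β‖ ^ (2:ℝ) := by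
    intro β
    have : ∀ a : (φ ⁻¹' {β} : Set τ), ‖(T x) (a:τ)‖ ^ ((2:ENNReal).toReal)
        = ‖w (a:τ)‖ ^ 2 * ‖x β‖ ^ (2:ℝ) := by
      intro a
      have ha : φ (a:τ) = β := a.2
      rw [hT, ha]
      rw [show ((2:ENNReal).toReal) = (2:ℝ) by norm_num]
      rw [norm_mul, Real.mul_rpow (norm_nonneg _) (norm_nonneg _), ws_rpow_two]
    rw [tsum_congr this, tsum_mul_right]
  have hxsum : Summable fun β => ‖x β‖ ^ ((2:ENNReal).toReal) :=
    (memℓp_gen_iff ws_hp).1 (lp.memℓp x)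
  have hxsum' : Summable fun β => M ^ 2 * ‖x β‖ ^ (2:ℝ) := by
    have := hxsum.mul_left (M ^ 2)
    simpa [show ((2:ENNReal).toReal) = (2:ℝ) by norm_num] using this
  -- total bound
  have htot : (∑' α, ‖(T x) α‖ ^ ((2:ENNReal).toReal)) ≤ M ^ 2 * ‖x‖ ^ (2:ℝ) := by
    rw [← hfiber.tsum_eq]
    have hle : ∀ β : τ, (∑' a : (φ ⁻¹' {β}), ‖(T x) (a:τ)‖ ^ ((2:ENNReal).toReal))
        ≤ M ^ 2 * ‖x β‖ ^ (2:ℝ) := by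
      intro β
      rw [hfib_val β]
      exact mul_le_mul_of_nonneg_right (hfib_le β) (Real.rpow_nonneg (norm_nonneg _) _)
    calc (∑' β, ∑' a : (φ ⁻¹' {β}), ‖(T x) (a:τ)‖ ^ ((2:ENNReal).toReal))
        ≤ ∑' β, M ^ 2 * ‖x β‖ ^ (2:ℝ) := Summable.tsum_le_tsum hle hfiber.summable hxsum'
      _ = M ^ 2 * ∑' β, ‖x β‖ ^ (2:ℝ) := tsum_mul_left
      _ = M ^ 2 * ‖x‖ ^ (2:ℝ) := by
          congr 1
          have := lp.norm_rpow_eq_tsum (E := fun _ : τ => ℂ) ws_hp x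
          rw [show ((2:ENNReal).toReal) = (2:ℝ) by norm_num] at this
          exact this.symm
  -- conclude
  rw [lp.norm_eq_tsum_rpow ws_hp]
  have h2 : ((2:ENNReal).toReal) = (2:ℝ) := by norm_num
  calc (∑' α, ‖(T x) α‖ ^ ((2:ENNReal).toReal)) ^ (1 / (2:ENNReal).toReal)
      ≤ (M ^ 2 * ‖x‖ ^ (2:ℝ)) ^ (1 / (2:ENNReal).toReal) := by
        apply Real.rpow_le_rpow (tsum_nonneg fun a => by positivity) htot
        rw [h2]; norm_num
    _ = M * ‖x‖ := by
        rw [h2, ws_rpow_two, ← mul_pow, ← Real.rpow_natCast (M * ‖x‖) 2,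
          ← Real.rpow_mul (by positivity)]
        norm_num
end

section
/- Let τ be a nonempty index set and φ : τ → τ a self-map. Then the generalized shift σ_φ maps ℓ²(τ) into ℓ²(τ) if and only if there exists N ≥ 1 such that for every β ∈ τ the fiber φ⁻¹(β) has at most N elements. -/
/-!
Summing `g ∘ φ` fibrewise gives `∑' α, g (φ α) = ∑' β, #φ⁻¹{β} • g β` for every `g ≥ 0`, so
`σ_φ` preserves `ℓ^p` exactly when multiplication by the fibre cardinalities preserves
summability of nonnegative families. Bounded weights clearly do; for unbounded weights put
mass `2⁻ᵏ` at a point of weight at least `2ᵏ`, which gives a summable family whose weighted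
sum is infinite.
-/

open Set
open scoped ENNReal NNReal

namespace ENNReal

variable {α β : Type*}

theorem tsum_comp_eq_tsum_encard_preimage_mul (φ : α → β) (g : β → ℝ≥0∞) :
    ∑' a, g (φ a) = ∑' b, (φ ⁻¹' {b}).encard * g b := by
  rw [← ENNReal.tsum_fiberwise _ φ]
  refine tsum_congr fun b => ?_
  rw [← tsum_set_const]
  exact tsum_congr fun a => by rw [a.2]

theorem exists_tsum_ne_top_and_tsum_mul_eq_top {w : β → ℝ≥0∞}
    (hw : ∀ n : ℕ, ∃ b, (n : ℝ≥0∞) ≤ w b) :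
    ∃ g : β → ℝ≥0∞, ∑' b, g b ≠ ⊤ ∧ ∑' b, w b * g b = ⊤ := by
  -- Put mass `2⁻¹ ^ k` at a point `s k` of weight at least `2 ^ k`; grouping the masses along the
  -- fibres of `s` makes it unnecessary for the points `s k` to be distinct.
  choose s hs using fun k : ℕ => hw (2 ^ k)
  refine ⟨fun b => ∑' k : s ⁻¹' {b}, 2⁻¹ ^ (k : ℕ), ?_, ?_⟩
  · rw [ENNReal.tsum_fiberwise (fun k => (2⁻¹ : ℝ≥0∞) ^ k) s, ENNReal.tsum_geometric]
    simp
  · have hterm : ∀ k, 1 ≤ w (s k) * 2⁻¹ ^ k := fun k =>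
      calc (1 : ℝ≥0∞) = 2 ^ k * 2⁻¹ ^ k := by
            rw [← mul_pow, ENNReal.mul_inv_cancel two_ne_zero ofNat_ne_top, one_pow]
        _ ≤ w (s k) * 2⁻¹ ^ k := by gcongr; exact_mod_cast hs k
    calc ∑' b, w b * ∑' k : s ⁻¹' {b}, 2⁻¹ ^ (k : ℕ)
        = ∑' b, ∑' k : s ⁻¹' {b}, w (s k) * 2⁻¹ ^ (k : ℕ) := by
          refine tsum_congr fun b => ?_
          rw [← ENNReal.tsum_mul_left]
          exact tsum_congr fun k => by rw [k.2]
      _ = ∑' k, w (s k) * 2⁻¹ ^ k := ENNReal.tsum_fiberwise (fun k => w (s k) * 2⁻¹ ^ k) s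
      _ = ⊤ := top_unique <| (ENNReal.tsum_const_eq_top_of_ne_zero one_ne_zero).symm.le.trans
          (ENNReal.tsum_le_tsum hterm)

end ENNReal

section lp

variable {α β : Type*}

theorem memℓp_iff_tsum_enorm_rpow_ne_top {E : α → Type*} [∀ i, NormedAddCommGroup (E i)]
    {p : ℝ≥0∞} (hp : 0 < p.toReal) {f : ∀ i, E i} :
    Memℓp f p ↔ ∑' i, ‖f i‖ₑ ^ p.toReal ≠ ⊤ := by
  have h : ∀ i, ‖f i‖ₑ ^ p.toReal = ((‖f i‖₊ ^ p.toReal : ℝ≥0) : ℝ≥0∞) := fun i =>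
    (ENNReal.coe_rpow_of_nonneg _ hp.le).symm
  rw [memℓp_gen_iff hp, tsum_congr h, ENNReal.tsum_coe_ne_top_iff_summable, ← NNReal.summable_coe]
  simp

variable {E : Type*} [NormedAddCommGroup E] {p : ℝ≥0∞}

theorem memℓp_comp_iff (hp : 0 < p.toReal) (φ : α → β) (x : β → E) :
    Memℓp (fun a => x (φ a)) p ↔ ∑' b, (φ ⁻¹' {b}).encard * ‖x b‖ₑ ^ p.toReal ≠ ⊤ := by
  rw [memℓp_iff_tsum_enorm_rpow_ne_top hp,
    ENNReal.tsum_comp_eq_tsum_encard_preimage_mul φ fun b => ‖x b‖ₑ ^ p.toReal]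

theorem Memℓp.comp_of_encard_preimage_le (hp : 0 < p.toReal) {φ : α → β} {N : ℕ}
    (hN : ∀ b, (φ ⁻¹' {b}).encard ≤ N) {x : β → E} (hx : Memℓp x p) :
    Memℓp (fun a => x (φ a)) p := by
  rw [memℓp_comp_iff hp]
  rw [memℓp_iff_tsum_enorm_rpow_ne_top hp] at hx
  refine ne_top_of_le_ne_top (ENNReal.mul_ne_top (ENNReal.natCast_ne_top N) hx) ?_
  rw [← ENNReal.tsum_mul_left]
  exact ENNReal.tsum_le_tsum fun b => by gcongr; exact_mod_cast hN b

theorem exists_forall_enorm_rpow_eq {𝕜 : Type*} [RCLike 𝕜] (hp : 0 < p.toReal) {g : β → ℝ≥0∞}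
    (hg : ∀ b, g b ≠ ⊤) : ∃ x : β → 𝕜, ∀ b, ‖x b‖ₑ ^ p.toReal = g b := by
  refine ⟨fun b => ((g b ^ p.toReal⁻¹).toReal : 𝕜), fun b => ?_⟩
  rw [← ofReal_norm, RCLike.norm_ofReal, abs_of_nonneg ENNReal.toReal_nonneg, ENNReal.ofReal_toReal
    (ENNReal.rpow_ne_top_of_nonneg (inv_nonneg.2 hp.le) (hg b)), ENNReal.rpow_inv_rpow hp.ne']

theorem exists_memℓp_not_memℓp_comp {𝕜 : Type*} [RCLike 𝕜] (hp : 0 < p.toReal) {φ : α → β}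
    (hφ : ¬∃ N : ℕ, ∀ b, (φ ⁻¹' {b}).encard ≤ N) :
    ∃ x : β → 𝕜, Memℓp x p ∧ ¬Memℓp (fun a => x (φ a)) p := by
  push Not at hφ
  obtain ⟨g, hg, hwg⟩ := ENNReal.exists_tsum_ne_top_and_tsum_mul_eq_top
    (w := fun b => ((φ ⁻¹' {b}).encard : ℝ≥0∞)) fun n => by
      obtain ⟨b, hb⟩ := hφ n
      exact ⟨b, by exact_mod_cast hb.le⟩
  obtain ⟨x, hx⟩ := exists_forall_enorm_rpow_eq (𝕜 := 𝕜) hp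
    (ENNReal.ne_top_of_tsum_ne_top hg)
  refine ⟨x, ?_, ?_⟩
  · rwa [memℓp_iff_tsum_enorm_rpow_ne_top hp, tsum_congr hx]
  · rw [memℓp_comp_iff hp, tsum_congr fun b => by rw [hx b]]
    exact not_not.2 hwg

end lp

theorem generalized_shift_maps_l2_iff_general {τ : Type*} (φ : τ → τ) :
    (∀ x : τ → ℂ, Memℓp x 2 → Memℓp (fun α => x (φ α)) 2) ↔
      ∃ N : ℕ, 1 ≤ N ∧ ∀ β : τ, (φ ⁻¹' {β}).encard ≤ N := by
  have hp : 0 < (2 : ℝ≥0∞).toReal := by norm_num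
  constructor
  · intro h
    by_contra hφ
    obtain ⟨x, hx, hxφ⟩ := exists_memℓp_not_memℓp_comp (𝕜 := ℂ) hp fun ⟨N, hN⟩ =>
      hφ ⟨max N 1, le_max_right N 1, fun b => (hN b).trans (by exact_mod_cast le_max_left N 1)⟩
    exact hxφ (h x hx)
  · rintro ⟨N, -, hN⟩ x hx
    exact hx.comp_of_encard_preimage_le hp hN

/-- The generalized shift `σ_φ` maps `ℓ²(τ)` into `ℓ²(τ)` if and only if
there exists `N ≥ 1` such that every fiber `φ⁻¹(β)` has at most `N` elements. -/
theorem generalized_shift_maps_l2_iff {τ : Type*} [Nonempty τ] (φ : τ → τ) :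
    (∀ x : τ → ℂ, Memℓp x 2 → Memℓp (fun α => x (φ α)) 2) ↔
      ∃ N : ℕ, 1 ≤ N ∧ ∀ β : τ, (φ ⁻¹' {β}).encard ≤ N :=
  generalized_shift_maps_l2_iff_general φ
end

section
/- Let τ be a nonempty index set, φ : τ → τ a self-map, and w : τ → ℂ a weight vector such that σ_{φ,w} maps ℓ²(τ) into ℓ²(τ). Then the Hilbert-space adjoint T* of the bounded operator T = σ_{φ,w}|_{ℓ²(τ)} is given coordinatewise by (T*(y))_θ = Σ_{α ∈ φ⁻¹(θ)} conj(w_α) · y_α for every y ∈ ℓ²(τ) and every θ ∈ τ, where the sum on the right converges. -/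
/-!
Pairing with the basis vector `e_θ` gives `(T* y)_θ = ⟪T e_θ, y⟫`, and `T e_θ` is the weight `w`
restricted to the fibre `φ⁻¹(θ)`; expanding that inner product coordinatewise in `ℓ²` gives the sum.
-/

open scoped InnerProductSpace

namespace lp

variable {ι 𝕜 F : Type*} [RCLike 𝕜] [NormedAddCommGroup F] [InnerProductSpace 𝕜 F]
  [CompleteSpace F]

theorem adjoint_apply_eq_inner_single [DecidableEq ι] (T : lp (fun _ : ι => 𝕜) 2 →L[𝕜] F)
    (y : F) (θ : ι) :
    T.adjoint y θ = ⟪T (lp.single 2 θ 1), y⟫_𝕜 := by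
  rw [← T.adjoint_inner_right, lp.inner_single_left, RCLike.inner_apply', map_one, one_mul]

end lp

theorem weightedShift_single_one_apply {τ : Type*} [DecidableEq τ] {φ : τ → τ} {w : τ → ℂ}
    {T : lp (fun _ : τ => ℂ) 2 →L[ℂ] lp (fun _ : τ => ℂ) 2}
    (hT : ∀ (x : lp (fun _ : τ => ℂ) 2) (α : τ), T x α = w α * x (φ α)) (θ α : τ) :
    T (lp.single 2 θ 1) α = (φ ⁻¹' {θ}).indicator w α := by
  by_cases hα : φ α = θ
  · simp [hT, hα]
  · simp [hT, lp.single_apply, hα]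

theorem weighted_shift_adjoint_apply_general {τ : Type*} (φ : τ → τ) (w : τ → ℂ)
    (T : lp (fun _ : τ => ℂ) 2 →L[ℂ] lp (fun _ : τ => ℂ) 2)
    (hT : ∀ (x : lp (fun _ : τ => ℂ) 2) (α : τ), T x α = w α * x (φ α))
    (y : lp (fun _ : τ => ℂ) 2) (θ : τ) :
    HasSum (fun α : (φ ⁻¹' {θ}) => (starRingEnd ℂ) (w (α : τ)) * y (α : τ))
      (ContinuousLinearMap.adjoint T y θ) := by
  classical
  rw [lp.adjoint_apply_eq_inner_single]
  have hterm : ∀ α, ⟪T (lp.single 2 θ 1) α, y α⟫_ℂ =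
      (φ ⁻¹' {θ}).indicator (fun α => (starRingEnd ℂ) (w α) * y α) α := by
    intro α
    rw [weightedShift_single_one_apply hT, RCLike.inner_apply']
    by_cases hα : α ∈ φ ⁻¹' {θ} <;> simp [hα]
  have h := lp.hasSum_inner (𝕜 := ℂ) (T (lp.single 2 θ 1)) y
  simp only [hterm] at h
  exact hasSum_subtype_iff_indicator.mpr h

/-- The Hilbert-space adjoint `T*` of the bounded weighted generalized shift
operator `T = σ_{φ,w}|_{ℓ²(τ)}` is given coordinatewise by
`(T*(y))_θ = Σ_{α ∈ φ⁻¹(θ)} conj(w_α) · y_α`, the sum on the right converging. -/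
theorem weighted_shift_adjoint_apply {τ : Type*} [Nonempty τ] (φ : τ → τ) (w : τ → ℂ)
    (T : lp (fun _ : τ => ℂ) 2 →L[ℂ] lp (fun _ : τ => ℂ) 2)
    (hT : ∀ (x : lp (fun _ : τ => ℂ) 2) (α : τ), T x α = w α * x (φ α))
    (y : lp (fun _ : τ => ℂ) 2) (θ : τ) :
    HasSum (fun α : (φ ⁻¹' {θ}) => (starRingEnd ℂ) (w (α : τ)) * y (α : τ))
      (ContinuousLinearMap.adjoint T y θ) :=
  weighted_shift_adjoint_apply_general φ w T hT y θ
end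

section
/- Let τ be a nonempty index set, φ : τ → τ a self-map, and w : τ → ℂ a weight vector such that σ_{φ,w} maps ℓ²(τ) into ℓ²(τ). Then there exist self-maps η_i : τ → τ and weight vectors u_i : τ → ℂ (i = 1, 2, 3, ...) such that: (a) for every i and every α ∈ τ, (u_i)_α belongs to {conj(w_β) : β ∈ τ} ∪ {0}; (b) for every i, σ_{η_i,u_i} maps ℓ²(τ) into ℓ²(τ); and (c) for every y ∈ ℓ²(τ) and every θ ∈ τ, the series Σ_{i≥1} (σ_{η_i,u_i}(y))_θ converges in ℂ to ((σ_{φ,w}|_{ℓ²(τ)})*(y))_θ. In other words, the adjoint of σ_{φ,w}|_{ℓ²(τ)} is a pointwise convergent series of weighted generalized shifts with weights in {conj(w_β) : β ∈ τ} ∪ {0}. -/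
open Function Set Complex ENNReal
open scoped InnerProductSpace

/-- The adjoint of a bounded weighted generalized shift operator
`σ_{φ,w}|_{ℓ²(τ)}` is a pointwise convergent series of weighted generalized shifts whose
weights lie in `{conj(w_β) : β ∈ τ} ∪ {0}`. -/
theorem weighted_shift_adjoint_series {τ : Type*} [Nonempty τ] (φ : τ → τ) (w : τ → ℂ)
    (T : lp (fun _ : τ => ℂ) 2 →L[ℂ] lp (fun _ : τ => ℂ) 2)
    (hT : ∀ (x : lp (fun _ : τ => ℂ) 2) (α : τ), T x α = w α * x (φ α)) :
    ∃ (η : ℕ → τ → τ) (u : ℕ → τ → ℂ),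
      (∀ i α, u i α ∈ Set.range (fun β => (starRingEnd ℂ) (w β)) ∪ {0}) ∧
      (∀ i, ∀ x : τ → ℂ, Memℓp x 2 → Memℓp (fun α => u i α * x (η i α)) 2) ∧
      (∀ (y : lp (fun _ : τ => ℂ) 2) (θ : τ),
        HasSum (fun i : ℕ => u i θ * y (η i θ)) (ContinuousLinearMap.adjoint T y θ)) := by
  classical
  set d : τ := Classical.arbitrary τ with hd
  have hg : ∀ θ α, (T (lp.single 2 θ (1:ℂ))) α = if φ α = θ then w α else 0 := by
    intro θ α
    rw [hT, lp.single_apply]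
    by_cases h : φ α = θ <;> simp [h]
  -- the weight is bounded by ‖T‖
  have hw : ∀ β, ‖w β‖ ≤ ‖T‖ := by
    intro β
    have h1 : ‖(T (lp.single 2 (φ β) (1:ℂ))) β‖ ≤ ‖T (lp.single 2 (φ β) (1:ℂ))‖ :=
      lp.norm_apply_le_norm two_ne_zero _ β
    have h2 : ‖T (lp.single 2 (φ β) (1:ℂ))‖ ≤ ‖T‖ * ‖(lp.single 2 (φ β) (1:ℂ) : lp (fun _ : τ => ℂ) 2)‖ :=
      T.le_opNorm _
    have h3 : ‖(lp.single 2 (φ β) (1:ℂ) : lp (fun _ : τ => ℂ) 2)‖ = 1 := by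
      have := lp.norm_single (p := 2) (E := fun _ : τ => ℂ) (by norm_num) (φ β) (1:ℂ)
      simpa using this
    have h4 := hg (φ β) β
    rw [if_pos rfl] at h4
    rw [h3, mul_one] at h2
    calc ‖w β‖ = ‖(T (lp.single 2 (φ β) (1:ℂ))) β‖ := by rw [h4]
      _ ≤ _ := h1.trans h2
  -- the relevant fibers are countable
  set S : τ → Set τ := fun θ => {β | φ β = θ ∧ w β ≠ 0} with hS
  have hScount : ∀ θ, (S θ).Countable := by
    intro θ
    have hsum : Summable (fun β => ‖(T (lp.single 2 θ (1:ℂ))) β‖ ^ (2:ℝ≥0∞).toReal) :=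
      (memℓp_gen_iff (by norm_num)).1 (lp.memℓp _)
    refine (hsum.countable_support).mono ?_
    rintro β ⟨h1, h2⟩
    have hpos : (0:ℝ) < ‖(T (lp.single 2 θ (1:ℂ))) β‖ ^ (2:ℝ≥0∞).toReal :=
      Real.rpow_pos_of_pos (by rw [hg θ β, if_pos h1]; exact norm_pos_iff.mpr h2) _
    exact Function.mem_support.mpr (ne_of_gt hpos)
  -- enumerate the fibers
  have hfex : ∀ θ, ∃ f : ℕ → τ, insert d (S θ) = Set.range f := fun θ =>
    ((hScount θ).insert d).exists_eq_range (Set.insert_nonempty _ _)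
  choose f hf using hfex
  have hfS : ∀ θ, S θ ⊆ Set.range (f θ) := fun θ => (hf θ) ▸ Set.subset_insert _ _
  set cond : τ → ℕ → Prop := fun θ i => f θ i ∈ S θ ∧ ∀ j < i, f θ j ≠ f θ i with hcond
  refine ⟨fun i θ => f θ i, fun i θ => if cond θ i then (starRingEnd ℂ) (w (f θ i)) else 0,
    ?_, ?_, ?_⟩
  · intro i α
    by_cases h : cond α i
    · exact Or.inl ⟨f α i, (if_pos h).symm⟩
    · exact Or.inr (by simp [if_neg h])
  · -- boundedness
    intro i x hx
    have hxs : Summable (fun β => ‖x β‖ ^ (2:ℝ≥0∞).toReal) := (memℓp_gen_iff (by norm_num)).1 hx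
    have hwx : Summable (fun β => ‖w β * x β‖ ^ (2:ℝ≥0∞).toReal) := by
      refine Summable.of_nonneg_of_le (fun b => Real.rpow_nonneg (norm_nonneg _) _)
        (fun b => ?_) (hxs.mul_left (‖T‖ ^ (2:ℝ≥0∞).toReal))
      rw [norm_mul, ← Real.mul_rpow (norm_nonneg _) (norm_nonneg _)]
      exact Real.rpow_le_rpow (by positivity)
        (mul_le_mul_of_nonneg_right (hw b) (norm_nonneg _)) (by norm_num)
    set B : Set τ := {α | cond α i} with hB
    have he_inj : Function.Injective (fun α : B => f (α : τ) i) := by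
      rintro ⟨α, hα⟩ ⟨α', hα'⟩ h
      simp only at h
      have h1 : φ (f α i) = α := hα.1.1
      have h2 : φ (f α' i) = α' := hα'.1.1
      have h3 := congrArg φ h
      rw [h1, h2] at h3
      exact Subtype.ext h3
    have hsupp : Function.support (fun α : τ => ‖(if cond α i then (starRingEnd ℂ) (w (f α i)) else 0) * x (f α i)‖ ^ (2:ℝ≥0∞).toReal) ⊆ B := by
      intro α hα
      by_contra h
      apply hα
      simp only [hB, Set.mem_setOf_eq] at h
      simp [if_neg h, Real.zero_rpow (by norm_num : (2:ℝ≥0∞).toReal ≠ 0)]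
    have hsub : Summable ((fun α : τ => ‖(if cond α i then (starRingEnd ℂ) (w (f α i)) else 0) * x (f α i)‖ ^ (2:ℝ≥0∞).toReal) ∘ ((↑) : B → τ)) := by
      refine (hwx.comp_injective he_inj).congr ?_
      rintro ⟨α, hα⟩
      simp only [Function.comp_apply]
      rw [if_pos (show cond α i from hα), norm_mul, norm_mul, RCLike.norm_conj]
    obtain ⟨a, ha⟩ := hsub
    exact memℓp_gen ⟨a, (hasSum_subtype_iff_of_support_subset hsupp).1 ha⟩
  · -- the adjoint formula
    intro y θ
    set A := ContinuousLinearMap.adjoint T y θ with hAdef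
    set F : τ → ℂ := fun β => if φ β = θ then (starRingEnd ℂ) (w β) * y β else 0 with hF
    have hstep1 : HasSum F A := by
      have h1 := lp.hasSum_inner (𝕜 := ℂ) (T (lp.single 2 θ (1:ℂ))) y
      have h2 : (fun β => ⟪(T (lp.single 2 θ (1:ℂ))) β, y β⟫_ℂ) = F := by
        funext β
        rw [RCLike.inner_apply, hg θ β, hF]
        by_cases h : φ β = θ <;> simp [h, mul_comm]
      have h3 : ⟪T (lp.single 2 θ (1:ℂ)), y⟫_ℂ = A := by
        rw [← ContinuousLinearMap.adjoint_inner_right, lp.inner_single_left]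
        simp [hAdef]
      rwa [h2, h3] at h1
    set C : Set ℕ := {i | cond θ i} with hC
    have he_inj : Function.Injective (fun i : C => f θ (i : ℕ)) := by
      rintro ⟨i, hi⟩ ⟨j, hj⟩ h
      simp only at h
      rcases lt_trichotomy i j with hij | hij | hij
      · exact absurd h (hj.2 i hij)
      · exact Subtype.ext hij
      · exact absurd h.symm (hi.2 j hij)
    have hrange : ∀ β ∉ Set.range (fun i : C => f θ (i : ℕ)), F β = 0 := by
      intro β hβ
      by_contra hne
      apply hβ
      have hβS : β ∈ S θ := by
        simp only [hF] at hne
        by_cases h : φ β = θ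
        · rw [if_pos h] at hne
          refine ⟨h, fun hw0 => hne ?_⟩
          simp [hw0]
        · exact absurd (if_neg h) hne
      have hex : ∃ i, f θ i = β := hfS θ hβS
      have hcondi : cond θ (Nat.find hex) := by
        refine ⟨(Nat.find_spec hex).symm ▸ hβS, fun j hj hje => ?_⟩
        exact Nat.find_min hex hj (hje.trans (Nat.find_spec hex))
      exact ⟨⟨Nat.find hex, hcondi⟩, Nat.find_spec hex⟩
    have hsum2 : HasSum (F ∘ fun i : C => f θ (i : ℕ)) A :=
      (he_inj.hasSum_iff hrange).2 hstep1
    have heq : (F ∘ fun i : C => f θ (i : ℕ)) =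
        (fun i : ℕ => (if cond θ i then (starRingEnd ℂ) (w (f θ i)) else 0) * y (f θ i)) ∘ ((↑) : C → ℕ) := by
      funext ⟨i, hi⟩
      have h1 : φ (f θ i) = θ := hi.1.1
      simp only [Function.comp_apply, hF]
      rw [if_pos h1, if_pos (show cond θ i from hi)]
    rw [heq] at hsum2
    have hsupp : Function.support (fun i : ℕ => (if cond θ i then (starRingEnd ℂ) (w (f θ i)) else 0) * y (f θ i)) ⊆ C := by
      intro i hi
      by_contra h
      apply hi
      show (if cond θ i then (starRingEnd ℂ) (w (f θ i)) else 0) * y (f θ i) = 0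
      rw [if_neg (show ¬ cond θ i from h), zero_mul]
    exact (hasSum_subtype_iff_of_support_subset hsupp).1 hsum2
end

section
/- Let τ be a nonempty index set, φ : τ → τ a self-map, and w : τ → ℂ a weight vector such that σ_{φ,w} maps ℓ²(τ) into ℓ²(τ). Suppose there exists δ > 0 such that for every α ∈ τ either w_α = 0 or |w_α| ≥ δ. Then there exist finitely many self-maps η_1, ..., η_m : τ → τ and weight vectors u_1, ..., u_m : τ → ℂ with each (u_i)_α ∈ {conj(w_β) : β ∈ τ} ∪ {0}, such that each σ_{η_i,u_i} maps ℓ²(τ) into ℓ²(τ) and (σ_{φ,w}|_{ℓ²(τ)})* = Σ_{i=1}^m σ_{η_i,u_i}|_{ℓ²(τ)}. -/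
open scoped ComplexConjugate ENNReal NNReal

private lemma sum_range_getD_nodup {τ : Type*} {M : Type*} [AddCommMonoid M] [DecidableEq τ]
    (l : List τ) (hl : l.Nodup) (d : τ) (f : τ → M) :
    ∑ i ∈ Finset.range l.length, f (l.getD i d) = ∑ α ∈ l.toFinset, f α := by
  induction l with
  | nil => simp
  | cons a l ih =>
    rw [List.length_cons, Finset.sum_range_succ']
    simp only [List.getD_cons_succ, List.getD_cons_zero]
    rw [ih (List.nodup_cons.mp hl).2, List.toFinset_cons,
      Finset.sum_insert (by simpa using (List.nodup_cons.mp hl).1)]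
    exact add_comm _ _

private lemma exists_shift_clm {τ : Type*} (v : τ → ℂ) (g : τ → τ) (M : ℝ)
    (hv : ∀ β, ‖v β‖ ≤ M) (hinj : Set.InjOn g {β | v β ≠ 0}) :
    ∃ S : lp (fun _ : τ => ℂ) 2 →L[ℂ] lp (fun _ : τ => ℂ) 2,
      ∀ x β, S x β = v β * x (g β) := by
  classical
  set M' : ℝ := max M 0 with hM'
  have hM0 : 0 ≤ M' := le_max_right _ _
  have hv' : ∀ β, ‖v β‖ ≤ M' := fun β => (hv β).trans (le_max_left _ _)
  have h2 : (2 : ℝ≥0∞).toReal = 2 := by norm_num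
  have key : ∀ (x : lp (fun _ : τ => ℂ) 2) (s : Finset τ),
      ∑ β ∈ s, ‖v β * x (g β)‖ ^ (2:ℝ) ≤ (M' * ‖x‖) ^ (2:ℝ) := by
    intro x s
    have hsplit : ∑ β ∈ s.filter (fun β => v β ≠ 0), ‖v β * x (g β)‖ ^ (2:ℝ)
        = ∑ β ∈ s, ‖v β * x (g β)‖ ^ (2:ℝ) := by
      refine Finset.sum_filter_of_ne fun β _ hne => ?_
      intro hv0
      apply hne
      simp [hv0, Real.zero_rpow]
    rw [← hsplit]
    have step1 : ∑ β ∈ s.filter (fun β => v β ≠ 0), ‖v β * x (g β)‖ ^ (2:ℝ)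
        ≤ M' ^ (2:ℝ) * ∑ β ∈ s.filter (fun β => v β ≠ 0), ‖x (g β)‖ ^ (2:ℝ) := by
      rw [Finset.mul_sum]
      refine Finset.sum_le_sum fun β _ => ?_
      rw [norm_mul, Real.mul_rpow (norm_nonneg _) (norm_nonneg _)]
      apply mul_le_mul_of_nonneg_right _ (Real.rpow_nonneg (norm_nonneg _) _)
      exact Real.rpow_le_rpow (norm_nonneg _) (hv' β) (by norm_num)
    have step2 : ∑ β ∈ s.filter (fun β => v β ≠ 0), ‖x (g β)‖ ^ (2:ℝ)
        = ∑ α ∈ (s.filter (fun β => v β ≠ 0)).image g, ‖x α‖ ^ (2:ℝ) := by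
      rw [Finset.sum_image]
      intro a ha b hb hab
      exact hinj (by simpa using (Finset.mem_filter.mp ha).2)
        (by simpa using (Finset.mem_filter.mp hb).2) hab
    have step3 : ∑ α ∈ (s.filter (fun β => v β ≠ 0)).image g, ‖x α‖ ^ (2:ℝ) ≤ ‖x‖ ^ (2:ℝ) := by
      have := lp.sum_rpow_le_norm_rpow (p := 2) (by norm_num) x
        ((s.filter (fun β => v β ≠ 0)).image g)
      simpa [h2] using this
    calc ∑ β ∈ s.filter (fun β => v β ≠ 0), ‖v β * x (g β)‖ ^ (2:ℝ)
        ≤ M' ^ (2:ℝ) * ∑ β ∈ s.filter (fun β => v β ≠ 0), ‖x (g β)‖ ^ (2:ℝ) := step1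
      _ ≤ M' ^ (2:ℝ) * ‖x‖ ^ (2:ℝ) := by
          apply mul_le_mul_of_nonneg_left _ (Real.rpow_nonneg hM0 _)
          rw [step2]; exact step3
      _ = (M' * ‖x‖) ^ (2:ℝ) := (Real.mul_rpow hM0 (norm_nonneg _)).symm
  have hmem : ∀ x : lp (fun _ : τ => ℂ) 2,
      Memℓp (fun β => v β * x (g β)) (2 : ℝ≥0∞) := by
    intro x
    refine memℓp_gen' (C := (M' * ‖x‖) ^ (2:ℝ)) ?_
    intro s
    simpa [h2] using key x s
  set L : lp (fun _ : τ => ℂ) 2 →ₗ[ℂ] lp (fun _ : τ => ℂ) 2 :=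
    { toFun := fun x => ⟨fun β => v β * x (g β), hmem x⟩
      map_add' := fun x y => by
        ext β
        simp [mul_add]
        rfl
      map_smul' := fun c x => by
        ext β
        simp [mul_comm, mul_left_comm] } with hL
  refine ⟨L.mkContinuous M' ?_, fun x β => rfl⟩
  intro x
  refine lp.norm_le_of_forall_sum_le (by norm_num) (mul_nonneg hM0 (norm_nonneg _)) ?_
  intro s
  simpa [h2, hL] using key x s

set_option maxHeartbeats 1000000 in
/-- If the weights of a bounded weighted generalized shift operator
`σ_{φ,w}|_{ℓ²(τ)}` are bounded away from zero (or zero), then its adjoint is a *finite* sum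
of weighted generalized shift operators with weights in `{conj(w_β) : β ∈ τ} ∪ {0}`. -/
theorem weighted_shift_adjoint_finite_sum {τ : Type*} [Nonempty τ] (φ : τ → τ) (w : τ → ℂ)
    (T : lp (fun _ : τ => ℂ) 2 →L[ℂ] lp (fun _ : τ => ℂ) 2)
    (hT : ∀ (x : lp (fun _ : τ => ℂ) 2) (α : τ), T x α = w α * x (φ α))
    (δ : ℝ) (hδ : 0 < δ) (hw : ∀ α, w α = 0 ∨ δ ≤ ‖w α‖) :
    ∃ (m : ℕ) (S : Fin m → (lp (fun _ : τ => ℂ) 2 →L[ℂ] lp (fun _ : τ => ℂ) 2))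
      (η : Fin m → τ → τ) (u : Fin m → τ → ℂ),
      (∀ i α, u i α ∈ Set.range (fun β => (starRingEnd ℂ) (w β)) ∪ {0}) ∧
      (∀ i (x : lp (fun _ : τ => ℂ) 2) (α : τ), S i x α = u i α * x (η i α)) ∧
      ContinuousLinearMap.adjoint T = ∑ i, S i := by
  classical
  have h2 : (2 : ℝ≥0∞).toReal = 2 := by norm_num
  have hsing : ∀ β : τ, ‖(lp.single 2 β (1:ℂ) : lp (fun _ : τ => ℂ) 2)‖ = 1 := by
    intro β
    simpa using lp.norm_single (E := fun _ : τ => ℂ) (p := 2) (by norm_num) (fun _ => (1:ℂ)) β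
  have hTsingle : ∀ α β : τ,
      (T (lp.single 2 β 1)) α = w α * (if φ α = β then 1 else 0) := by
    intro α β
    rw [hT]
    congr 1
    by_cases h : φ α = β
    · rw [h, lp.single_apply_self, if_pos rfl]
    · rw [lp.single_apply_ne _ _ _ h, if_neg h]
  have hwT : ∀ α, ‖w α‖ ≤ ‖T‖ := by
    intro α
    have h1 : (T (lp.single 2 (φ α) 1)) α = w α := by
      rw [hTsingle, if_pos rfl, mul_one]
    calc ‖w α‖ = ‖(T (lp.single 2 (φ α) 1)) α‖ := by rw [h1]
      _ ≤ ‖T (lp.single 2 (φ α) 1)‖ := lp.norm_apply_le_norm (by norm_num) _ _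
      _ ≤ ‖T‖ * ‖(lp.single 2 (φ α) (1:ℂ) : lp (fun _ : τ => ℂ) 2)‖ := T.le_opNorm _
      _ = ‖T‖ := by rw [hsing, mul_one]
  set F : τ → Set τ := fun β => {α | φ α = β ∧ w α ≠ 0} with hF
  have hcard : ∀ (β : τ) (s : Finset τ), ↑s ⊆ F β → (s.card : ℝ) * δ ^ 2 ≤ ‖T‖ ^ 2 := by
    intro β s hs
    have hterm : ∀ α ∈ s, δ ^ 2 ≤ ‖(T (lp.single 2 β 1)) α‖ ^ (2:ℝ) := by
      intro α hα
      obtain ⟨hφ, hw0⟩ := hs hα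
      have hTw : (T (lp.single 2 β 1)) α = w α := by rw [hTsingle, if_pos hφ, mul_one]
      rw [hTw, Real.rpow_two]
      exact pow_le_pow_left₀ hδ.le ((hw α).resolve_left hw0) 2
    calc (s.card : ℝ) * δ ^ 2 = ∑ _α ∈ s, δ ^ 2 := by rw [Finset.sum_const, nsmul_eq_mul]
      _ ≤ ∑ α ∈ s, ‖(T (lp.single 2 β 1)) α‖ ^ (2:ℝ) := Finset.sum_le_sum hterm
      _ ≤ ‖T (lp.single 2 β 1)‖ ^ (2:ℝ) := by
          simpa [h2] using lp.sum_rpow_le_norm_rpow (by norm_num) (T (lp.single 2 β 1)) s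
      _ ≤ ‖T‖ ^ 2 := by
          rw [Real.rpow_two]
          have hle := T.le_opNorm (lp.single 2 β (1:ℂ))
          rw [hsing β, mul_one] at hle
          exact pow_le_pow_left₀ (norm_nonneg _) hle 2
  have hFin : ∀ β, (F β).Finite := by
    intro β
    by_contra hinf
    obtain ⟨s, hsub, hcardeq⟩ :=
      Set.Infinite.exists_subset_card_eq hinf (⌊‖T‖ ^ 2 / δ ^ 2⌋₊ + 1)
    have hc := hcard β s hsub
    rw [hcardeq] at hc
    have hle : ((⌊‖T‖ ^ 2 / δ ^ 2⌋₊ + 1 : ℕ) : ℝ) ≤ ‖T‖ ^ 2 / δ ^ 2 := by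
      rw [le_div_iff₀ (by positivity)]
      exact hc
    have := Nat.le_floor hle
    omega
  set m : ℕ := ⌊‖T‖ ^ 2 / δ ^ 2⌋₊ with hm
  set d : τ := Classical.arbitrary τ with hd
  set l : τ → List τ := fun β => (hFin β).toFinset.toList with hl
  have hlnodup : ∀ β, (l β).Nodup := fun β => Finset.nodup_toList _
  have hmemF : ∀ β α, α ∈ l β ↔ α ∈ F β := by
    intro β α
    rw [hl]
    rw [Finset.mem_toList, Set.Finite.mem_toFinset]
  have hlen : ∀ β, (l β).length ≤ m := by
    intro β
    have h1 : (l β).length = (hFin β).toFinset.card := Finset.length_toList _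
    have h2' := hcard β (hFin β).toFinset (by simp [Set.Finite.coe_toFinset])
    rw [h1]
    apply Nat.le_floor
    rw [le_div_iff₀ (by positivity)]
    exact h2'
  set η : ℕ → τ → τ := fun i β => (l β).getD i d with hη
  set u : ℕ → τ → ℂ := fun i β =>
    if i < (l β).length then (starRingEnd ℂ) (w ((l β).getD i d)) else 0 with hu
  have hηmem : ∀ i β, i < (l β).length → η i β ∈ F β := by
    intro i β hi
    rw [← hmemF]
    rw [hη]
    simp only
    rw [List.getD_eq_getElem (l β) d hi]
    exact List.getElem_mem hi
  have hinj : ∀ i, Set.InjOn (η i) {β | u i β ≠ 0} := by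
    intro i β1 hβ1 β2 hβ2 heq
    have h1 : i < (l β1).length := by
      by_contra h
      exact hβ1 (by simp [hu, h])
    have h2'' : i < (l β2).length := by
      by_contra h
      exact hβ2 (by simp [hu, h])
    have e1 := (hηmem i β1 h1).1
    have e2 := (hηmem i β2 h2'').1
    rw [← e1, ← e2, heq]
  have hub : ∀ i β, ‖u i β‖ ≤ ‖T‖ := by
    intro i β
    rw [hu]
    simp only
    split_ifs with h
    · rw [RCLike.norm_conj]
      exact hwT _
    · simp only [norm_zero]
      exact norm_nonneg T
  have hex : ∀ i : ℕ, ∃ S : lp (fun _ : τ => ℂ) 2 →L[ℂ] lp (fun _ : τ => ℂ) 2,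
      ∀ x β, S x β = u i β * x (η i β) :=
    fun i => exists_shift_clm (u i) (η i) ‖T‖ (hub i) (hinj i)
  choose SN hSN using hex
  have hadj : ∀ (y : lp (fun _ : τ => ℂ) 2) (β : τ),
      (ContinuousLinearMap.adjoint T y) β
        = ∑ α ∈ (hFin β).toFinset, (starRingEnd ℂ) (w α) * y α := by
    intro y β
    have h1 : (inner ℂ (lp.single 2 β (1:ℂ)) (ContinuousLinearMap.adjoint T y) : ℂ)
        = (ContinuousLinearMap.adjoint T y) β := by
      rw [lp.inner_single_left, RCLike.inner_apply]
      simp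
    rw [← h1, ContinuousLinearMap.adjoint_inner_right, lp.inner_eq_tsum]
    have h3 : ∀ α : τ, (inner ℂ ((T (lp.single 2 β 1)) α) (y α) : ℂ)
        = (starRingEnd ℂ) ((T (lp.single 2 β 1)) α) * y α := fun α => (RCLike.inner_apply _ _).trans (mul_comm _ _)
    calc (∑' α, (inner ℂ ((T (lp.single 2 β 1)) α) (y α) : ℂ))
        = ∑ α ∈ (hFin β).toFinset, (inner ℂ ((T (lp.single 2 β 1)) α) (y α) : ℂ) := by
          apply tsum_eq_sum
          intro α hα
          rw [h3]
          have hz : (T (lp.single 2 β 1)) α = 0 := by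
            rw [hTsingle]
            rw [Set.Finite.mem_toFinset] at hα
            by_cases hφ : φ α = β
            · have hw0 : w α = 0 := by
                by_contra hcon
                exact hα ⟨hφ, hcon⟩
              simp [hw0]
            · simp [hφ]
          simp [hz]
      _ = ∑ α ∈ (hFin β).toFinset, (starRingEnd ℂ) (w α) * y α := by
          refine Finset.sum_congr rfl fun α hα => ?_
          rw [h3]
          rw [Set.Finite.mem_toFinset] at hα
          rw [hTsingle, if_pos hα.1, mul_one]
  have hsum : ∀ (y : lp (fun _ : τ => ℂ) 2) (β : τ),
      ((∑ i : Fin m, SN i) y) β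
        = ∑ α ∈ (hFin β).toFinset, (starRingEnd ℂ) (w α) * y α := by
    intro y β
    have h1 : ((∑ i : Fin m, SN i) y) β = ∑ i : Fin m, (SN i y) β := by
      rw [ContinuousLinearMap.sum_apply, lp.coeFn_sum, Finset.sum_apply]
    rw [h1]
    calc ∑ i : Fin m, (SN ↑i y) β
        = ∑ i ∈ Finset.range m, u i β * y (η i β) := by
          rw [← Fin.sum_univ_eq_sum_range (fun i => u i β * y (η i β)) m]
          exact Finset.sum_congr rfl fun i _ => hSN i y β
      _ = ∑ i ∈ Finset.range (l β).length, u i β * y (η i β) := by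
          refine (Finset.sum_subset (Finset.range_subset_range.mpr (hlen β)) ?_).symm
          intro i _ hi
          rw [Finset.mem_range, not_lt] at hi
          have : u i β = 0 := by simp [hu, Nat.not_lt.mpr hi]
          rw [this, zero_mul]
      _ = ∑ i ∈ Finset.range (l β).length,
            (fun α => (starRingEnd ℂ) (w α) * y α) ((l β).getD i d) := by
          refine Finset.sum_congr rfl fun i hi => ?_
          rw [Finset.mem_range] at hi
          simp [hu, hη, hi]
      _ = ∑ α ∈ (l β).toFinset, (starRingEnd ℂ) (w α) * y α :=
          sum_range_getD_nodup _ (hlnodup β) d (fun α => (starRingEnd ℂ) (w α) * y α)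
      _ = ∑ α ∈ (hFin β).toFinset, (starRingEnd ℂ) (w α) * y α := by
          rw [hl]
          simp only
          rw [Finset.toList_toFinset]
  refine ⟨m, fun i => SN i, fun i => η i, fun i => u i, ?_, ?_, ?_⟩
  · intro i α
    by_cases h : (i : ℕ) < (l α).length
    · exact Or.inl ⟨(l α).getD i d, by simp [hu, h]⟩
    · exact Or.inr (by simp [hu, h])
  · intro i x α
    exact hSN i x α
  · apply ContinuousLinearMap.ext
    intro y
    apply lp.ext
    funext β
    have h1 := hadj y β
    have h2' := hsum y β
    simp only at h1 h2' ⊢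
    rw [h1, ← h2']
end

section
/- Let τ be a nonempty index set and let A ⊆ ℂ be nonempty and conjugate invariant (i.e., conj(λ) ∈ A for every λ ∈ A). Suppose 0 is not a limit point of A, i.e., there exists δ > 0 such that every z ∈ A satisfies z = 0 or |z| ≥ δ. Let S be the set of all finite sums of (A ∪ {0})-weighted generalized shift operators on ℓ²(τ). Then S is adjoint invariant: for every T ∈ S, the adjoint T* belongs to S. -/
/-- An `A`-weighted generalized shift operator on `ℓ²(τ)`: a bounded operator that acts as
`x ↦ (u_α · x_{φ(α)})_α` for some self-map `φ : τ → τ` and weights `u` with values in `A`. -/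
def IsWGSOp {τ : Type*} (A : Set ℂ)
    (T : lp (fun _ : τ => ℂ) 2 →L[ℂ] lp (fun _ : τ => ℂ) 2) : Prop :=
  ∃ (φ : τ → τ) (u : τ → ℂ), (∀ α, u α ∈ A) ∧
    ∀ (x : lp (fun _ : τ => ℂ) 2) (α : τ), T x α = u α * x (φ α)

/-- The additive semigroup generated by `A`-weighted generalized shift operators on `ℓ²(τ)`:
the set of all (nonempty) finite sums of such operators. -/
def WGSSemigroup {τ : Type*} (A : Set ℂ) :
    Set (lp (fun _ : τ => ℂ) 2 →L[ℂ] lp (fun _ : τ => ℂ) 2) :=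
  {T | ∃ (m : ℕ) (S : Fin m → (lp (fun _ : τ => ℂ) 2 →L[ℂ] lp (fun _ : τ => ℂ) 2)),
    0 < m ∧ (∀ i, IsWGSOp A (S i)) ∧ T = ∑ i, S i}

/-!
The adjoint of `σ_{φ,u}` acts by `(σ* y)_β = ∑_{φ α = β} conj (u α) y α`. Testing `σ` on the unit
vector `e_β` shows that the fibre `{α | φ α = β, u α ≠ 0}` has at most `‖σ‖² / δ²` elements, since
each of its weights has modulus at least `δ`. Enumerating every fibre, the `k`-th elements form maps
`ψ_k` with `φ ∘ ψ_k = id` where defined, so `σ*` is the finite sum of the weighted shifts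
`y ↦ conj (u ∘ ψ_k) · (y ∘ ψ_k)`, each bounded because `ψ_k` is injective on the support of its
weights.
-/

open scoped ComplexConjugate ENNReal

open Finset

theorem Set.finite_of_forall_finset_card_le {α : Type*} {s : Set α} {N : ℕ}
    (h : ∀ t : Finset α, ↑t ⊆ s → t.card ≤ N) : s.Finite := by
  by_contra hs
  obtain ⟨t, hts, ht⟩ := Set.Infinite.exists_subset_card_eq hs (N + 1)
  have := h t hts
  omega

namespace Finset

variable {α : Type*}

noncomputable def enumOr (s : Finset α) (d : α) (k : ℕ) : α :=
  if h : k < s.card then s.equivFin.symm ⟨k, h⟩ else d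

theorem enumOr_mem (s : Finset α) (d : α) {k : ℕ} (hk : k < s.card) : s.enumOr d k ∈ s := by
  rw [enumOr, dif_pos hk]
  exact coe_mem _

theorem sum_eq_sum_fin_enumOr {M : Type*} [AddCommMonoid M] (s : Finset α) (d : α) {N : ℕ}
    (hN : s.card ≤ N) (g : α → M) :
    ∑ a ∈ s, g a = ∑ k : Fin N, if (k : ℕ) < s.card then g (s.enumOr d k) else 0 := by
  rw [Fin.sum_univ_eq_sum_range (fun k => if k < s.card then g (s.enumOr d k) else 0),
    ← sum_subset (range_subset_range.mpr hN) fun k _ hk => if_neg (by simpa using hk),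
    sum_congr rfl fun k hk => if_pos (mem_range.mp hk),
    ← Fin.sum_univ_eq_sum_range (fun k => g (s.enumOr d k)), ← s.sum_coe_sort g,
    ← s.equivFin.symm.sum_comp]
  refine sum_congr rfl fun k _ => ?_
  rw [enumOr, dif_pos k.2]

end Finset

namespace lp

theorem card_mul_rpow_le_norm_rpow {α : Type*} {E : α → Type*} [∀ i, NormedAddCommGroup (E i)]
    {p : ℝ≥0∞} (hp : 0 < p.toReal) (f : lp E p) {δ : ℝ} (hδ : 0 ≤ δ) {s : Finset α}
    (hs : ∀ i ∈ s, δ ≤ ‖f i‖) : s.card * δ ^ p.toReal ≤ ‖f‖ ^ p.toReal :=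
  calc s.card * δ ^ p.toReal = ∑ _i ∈ s, δ ^ p.toReal := by rw [sum_const, nsmul_eq_mul]
    _ ≤ ∑ i ∈ s, ‖f i‖ ^ p.toReal := sum_le_sum fun i hi => by gcongr; exact hs i hi
    _ ≤ ‖f‖ ^ p.toReal := sum_rpow_le_norm_rpow hp f s

variable {τ 𝕜 : Type*}

theorem exists_clm_apply_eq_mul_comp_of_injOn [NormedField 𝕜] {p : ℝ≥0∞} [Fact (1 ≤ p)]
    (hp : p ≠ ∞) (ψ : τ → τ) (v : τ → 𝕜) {C : ℝ} (hC : 0 ≤ C) (hv : ∀ β, ‖v β‖ ≤ C)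
    (hψ : Set.InjOn ψ (Function.support v)) :
    ∃ S : lp (fun _ : τ => 𝕜) p →L[𝕜] lp (fun _ : τ => 𝕜) p, ∀ x β, S x β = v β * x (ψ β) := by
  classical
  have hp0 : 0 < p.toReal := ENNReal.toReal_pos (zero_lt_one.trans_le Fact.out).ne' hp
  have hsum : ∀ (x : lp (fun _ : τ => 𝕜) p) (s : Finset τ),
      ∑ β ∈ s, ‖v β * x (ψ β)‖ ^ p.toReal ≤ (C * ‖x‖) ^ p.toReal := by
    intro x s
    calc ∑ β ∈ s, ‖v β * x (ψ β)‖ ^ p.toReal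
        = ∑ β ∈ s with v β ≠ 0, ‖v β * x (ψ β)‖ ^ p.toReal := by
          refine (sum_filter_of_ne (p := fun β => v β ≠ 0) fun β _ h hv0 => h ?_).symm
          simp [hv0, hp0.ne']
      _ ≤ ∑ β ∈ s with v β ≠ 0, C ^ p.toReal * ‖x (ψ β)‖ ^ p.toReal := by
          gcongr with β
          rw [norm_mul, Real.mul_rpow (norm_nonneg _) (norm_nonneg _)]
          gcongr
          exact hv β
      _ = C ^ p.toReal * ∑ α ∈ (s.filter (v · ≠ 0)).image ψ, ‖x α‖ ^ p.toReal := by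
          rw [← mul_sum, sum_image (s := s.filter (v · ≠ 0)) (f := fun α => ‖x α‖ ^ p.toReal)
            fun a ha b hb => hψ (mem_filter.mp ha).2 (mem_filter.mp hb).2]
      _ ≤ C ^ p.toReal * ‖x‖ ^ p.toReal := by gcongr; exact sum_rpow_le_norm_rpow hp0 x _
      _ = (C * ‖x‖) ^ p.toReal := (Real.mul_rpow hC (norm_nonneg _)).symm
  let L : lp (fun _ : τ => 𝕜) p →ₗ[𝕜] lp (fun _ : τ => 𝕜) p :=
    { toFun x := ⟨fun β => v β * x (ψ β), memℓp_gen' (hsum x)⟩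
      map_add' x y := by ext β; exact mul_add ..
      map_smul' c x := by ext β; simp [mul_left_comm] }
  exact ⟨L.mkContinuous C fun x => norm_le_of_forall_sum_le hp0 (by positivity) (hsum x),
    fun _ _ => rfl⟩

theorem adjoint_apply_eq_tsum [RCLike 𝕜] [DecidableEq τ]
    (T : lp (fun _ : τ => 𝕜) 2 →L[𝕜] lp (fun _ : τ => 𝕜) 2) (y : lp (fun _ : τ => 𝕜) 2) (β : τ) :
    T.adjoint y β = ∑' α, conj (T (lp.single 2 β 1) α) * y α := by
  calc T.adjoint y β = inner 𝕜 (lp.single 2 β (1 : 𝕜)) (T.adjoint y) := by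
        simp [inner_single_left]
    _ = _ := by
        rw [ContinuousLinearMap.adjoint_inner_right, inner_eq_tsum]
        simp [RCLike.inner_apply, mul_comm]

end lp

namespace WeightedShift

variable {τ : Type*} {φ : τ → τ} {u : τ → ℂ}
  {T : lp (fun _ : τ => ℂ) 2 →L[ℂ] lp (fun _ : τ => ℂ) 2}

theorem apply_single [DecidableEq τ] (hT : ∀ x α, T x α = u α * x (φ α)) (β α : τ) :
    T (lp.single 2 β 1) α = if φ α = β then u α else 0 := by
  rw [hT, lp.single_apply]
  split_ifs with h
  · simp [h]
  · simp [Pi.single_eq_of_ne h]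

theorem norm_weight_le_opNorm (hT : ∀ x α, T x α = u α * x (φ α)) (α : τ) : ‖u α‖ ≤ ‖T‖ := by
  classical
  calc ‖u α‖ = ‖T (lp.single 2 (φ α) 1) α‖ := by rw [apply_single hT, if_pos rfl]
    _ ≤ ‖T (lp.single 2 (φ α) 1)‖ := lp.norm_apply_le_norm two_ne_zero _ _
    _ ≤ ‖T‖ := by simpa [lp.norm_single] using T.le_opNorm (lp.single 2 (φ α) 1)

theorem card_le_of_subset_fiber (hT : ∀ x α, T x α = u α * x (φ α)) {δ : ℝ} (hδ : 0 < δ)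
    (hu : ∀ α, u α ≠ 0 → δ ≤ ‖u α‖) (β : τ) {s : Finset τ}
    (hs : ↑s ⊆ {α | φ α = β ∧ u α ≠ 0}) : s.card ≤ ⌈‖T‖ ^ 2 / δ ^ 2⌉₊ := by
  classical
  have hcard : s.card * δ ^ 2 ≤ ‖T (lp.single 2 β 1)‖ ^ 2 := by
    simpa using lp.card_mul_rpow_le_norm_rpow (by norm_num) (T (lp.single 2 β 1)) hδ.le
      fun α hα => by rw [apply_single hT, if_pos (hs hα).1]; exact hu α (hs hα).2
  have hT1 : ‖T (lp.single 2 β 1)‖ ≤ ‖T‖ := by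
    simpa [lp.norm_single] using T.le_opNorm (lp.single 2 β 1)
  have hsT : (s.card : ℝ) ≤ ‖T‖ ^ 2 / δ ^ 2 := by
    rw [le_div_iff₀ (by positivity)]
    exact hcard.trans (by gcongr)
  exact_mod_cast hsT.trans (Nat.le_ceil _)

theorem adjoint_apply_eq_sum_fiber (hT : ∀ x α, T x α = u α * x (φ α)) {G : τ → Finset τ}
    (hG : ∀ β α, α ∈ G β ↔ φ α = β ∧ u α ≠ 0) (y : lp (fun _ : τ => ℂ) 2) (β : τ) :
    T.adjoint y β = ∑ α ∈ G β, conj (u α) * y α := by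
  classical
  rw [lp.adjoint_apply_eq_tsum, tsum_eq_sum fun α hα => ?_]
  · refine sum_congr rfl fun α hα => ?_
    rw [apply_single hT, if_pos ((hG β α).mp hα).1]
  · rw [apply_single hT]
    split_ifs with h
    · simp [not_not.mp fun hu => hα ((hG β α).mpr ⟨h, hu⟩)]
    · simp

end WeightedShift

open WeightedShift

theorem add_mem_wgsSemigroup {τ : Type*} {B : Set ℂ}
    {T T' : lp (fun _ : τ => ℂ) 2 →L[ℂ] lp (fun _ : τ => ℂ) 2}
    (hT : T ∈ WGSSemigroup B) (hT' : T' ∈ WGSSemigroup B) : T + T' ∈ WGSSemigroup B := by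
  obtain ⟨m, S, hm, hS, rfl⟩ := hT
  obtain ⟨m', S', -, hS', rfl⟩ := hT'
  refine ⟨m + m', Fin.append S S', by omega, Fin.addCases (by simpa using hS) (by simpa using hS'),
    by rw [Fin.sum_univ_add]; simp⟩

theorem sum_mem_wgsSemigroup {τ ι : Type*} {B : Set ℂ} {s : Finset ι} (hs : s.Nonempty)
    {f : ι → lp (fun _ : τ => ℂ) 2 →L[ℂ] lp (fun _ : τ => ℂ) 2}
    (hf : ∀ i ∈ s, f i ∈ WGSSemigroup B) : ∑ i ∈ s, f i ∈ WGSSemigroup B := by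
  induction hs using Finset.Nonempty.cons_induction with
  | singleton i => simpa using hf i (mem_singleton_self i)
  | cons i s hi hs ih =>
    rw [sum_cons]
    exact add_mem_wgsSemigroup (hf i (mem_cons_self i s))
      (ih fun j hj => hf j (mem_cons_of_mem hj))

theorem mem_wgsSemigroup_of_apply_eq_sum {τ : Type*} {B : Set ℂ} (hB0 : 0 ∈ B)
    {R : lp (fun _ : τ => ℂ) 2 →L[ℂ] lp (fun _ : τ => ℂ) 2} {G : τ → Finset τ}
    (hG : Pairwise fun β β' => Disjoint (G β) (G β')) {N : ℕ} (hN : ∀ β, (G β).card ≤ N)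
    {w : τ → ℂ} (hwB : ∀ α, w α ∈ B) {C : ℝ} (hC : 0 ≤ C) (hwC : ∀ α, ‖w α‖ ≤ C)
    (hR : ∀ y β, R y β = ∑ α ∈ G β, w α * y α) : R ∈ WGSSemigroup B := by
  let ψ (k : Fin (N + 1)) (β : τ) : τ := (G β).enumOr β k
  let v (k : Fin (N + 1)) (β : τ) : ℂ := if (k : ℕ) < (G β).card then w (ψ k β) else 0
  have hv_ne_zero {k β} (h : v k β ≠ 0) : (k : ℕ) < (G β).card := by
    by_contra hk
    exact h (if_neg hk)
  have hinj (k) : Set.InjOn (ψ k) (Function.support (v k)) := by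
    intro β hβ β' hβ' hψ
    by_contra hne
    refine Finset.disjoint_left.mp (hG hne) (enumOr_mem _ β (hv_ne_zero hβ)) ?_
    have hα' : ψ k β' ∈ G β' := enumOr_mem _ β' (hv_ne_zero hβ')
    rwa [← hψ] at hα'
  have hvC (k β) : ‖v k β‖ ≤ C := by
    unfold v
    split_ifs
    exacts [hwC _, by simpa using hC]
  choose S hS using fun k =>
    lp.exists_clm_apply_eq_mul_comp_of_injOn (p := 2) ENNReal.ofNat_ne_top (ψ k) (v k) hC (hvC k)
      (hinj k)
  -- `N + 1` summands, as the semigroup only contains nonempty sums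
  refine ⟨N + 1, S, N.succ_pos, fun k => ⟨ψ k, v k, fun β => ?_, hS k⟩, ?_⟩
  · unfold v
    split_ifs
    exacts [hwB _, hB0]
  · ext y β
    rw [hR, sum_eq_sum_fin_enumOr (G β) β (Nat.le_succ_of_le (hN β)),
      _root_.sum_apply, lp.coeFn_sum, Finset.sum_apply]
    refine sum_congr rfl fun k _ => ?_
    rw [hS, ite_mul, zero_mul]

theorem IsWGSOp.adjoint_mem_wgsSemigroup {τ : Type*} {B : Set ℂ}
    (hconj : ∀ z ∈ B, conj z ∈ B) (hB0 : 0 ∈ B) {δ : ℝ} (hδ : 0 < δ)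
    (hB : ∀ z ∈ B, z = 0 ∨ δ ≤ ‖z‖) {T : lp (fun _ : τ => ℂ) 2 →L[ℂ] lp (fun _ : τ => ℂ) 2}
    (hT : IsWGSOp B T) : T.adjoint ∈ WGSSemigroup B := by
  obtain ⟨φ, u, huB, hTu⟩ := hT
  have hu (α) (h : u α ≠ 0) : δ ≤ ‖u α‖ := (hB _ (huB α)).resolve_left h
  have hcard := card_le_of_subset_fiber hTu hδ hu
  let G (β : τ) : Finset τ := (Set.finite_of_forall_finset_card_le fun _ => hcard β).toFinset
  have hG (β α) : α ∈ G β ↔ φ α = β ∧ u α ≠ 0 := by simp [G]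
  refine mem_wgsSemigroup_of_apply_eq_sum hB0 (G := G) (w := conj ∘ u) ?_
    (fun β => hcard β (by simp [G])) (fun α => hconj _ (huB α)) (norm_nonneg T)
    (fun α => by simpa using norm_weight_le_opNorm hTu α) (adjoint_apply_eq_sum_fiber hTu hG)
  intro β β' hne
  refine Finset.disjoint_left.mpr fun α hα hα' => hne ?_
  exact ((hG β α).mp hα).1.symm.trans ((hG β' α).mp hα').1

theorem wgs_semigroup_adjoint_invariant_of_zero_not_limit_general {τ : Type*}
    (A : Set ℂ) (hconj : ∀ z ∈ A, (starRingEnd ℂ) z ∈ A)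
    (δ : ℝ) (hδ : 0 < δ) (h0 : ∀ z ∈ A, z = 0 ∨ δ ≤ ‖z‖) :
    ∀ T ∈ WGSSemigroup (τ := τ) (A ∪ {0}),
      ContinuousLinearMap.adjoint T ∈ WGSSemigroup (τ := τ) (A ∪ {0}) := by
  have hconj' : ∀ z ∈ A ∪ {0}, conj z ∈ A ∪ {0} := by
    rintro z (hz | rfl)
    exacts [Or.inl (hconj z hz), Or.inr (map_zero _)]
  have h0' : ∀ z ∈ A ∪ {0}, z = 0 ∨ δ ≤ ‖z‖ := by
    rintro z (hz | rfl)
    exacts [h0 z hz, Or.inl rfl]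
  rintro _ ⟨m, S, hm, hS, rfl⟩
  rw [map_sum]
  exact sum_mem_wgsSemigroup (univ_nonempty_iff.mpr ⟨⟨0, hm⟩⟩)
    fun i _ => (hS i).adjoint_mem_wgsSemigroup hconj' (Or.inr rfl) hδ h0'

/-- If `A ⊆ ℂ` is nonempty, conjugate invariant and `0` is not a limit point
of `A`, then the additive semigroup generated by `A ∪ {0}`-weighted generalized shift operators
on `ℓ²(τ)` is adjoint invariant. -/
theorem wgs_semigroup_adjoint_invariant_of_zero_not_limit {τ : Type*} [Nonempty τ]
    (A : Set ℂ) (hA : A.Nonempty) (hconj : ∀ z ∈ A, (starRingEnd ℂ) z ∈ A)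
    (δ : ℝ) (hδ : 0 < δ) (h0 : ∀ z ∈ A, z = 0 ∨ δ ≤ ‖z‖) :
    ∀ T ∈ WGSSemigroup (τ := τ) (A ∪ {0}),
      ContinuousLinearMap.adjoint T ∈ WGSSemigroup (τ := τ) (A ∪ {0}) :=
  wgs_semigroup_adjoint_invariant_of_zero_not_limit_general A hconj δ hδ h0
end

section
/- Let τ be a nonempty finite index set and let A ⊆ ℂ be nonempty and conjugate invariant (i.e., conj(λ) ∈ A for every λ ∈ A). Let S be the set of all finite sums of (A ∪ {0})-weighted generalized shift operators on ℓ²(τ). Then S is adjoint invariant: for every T ∈ S, the adjoint T* belongs to S. -/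
open scoped ComplexConjugate

local notation "ℓ²" τ => lp (fun _ : τ => ℂ) 2

section Aux
variable {τ : Type*} [Fintype τ]

noncomputable def lpCoeLM : (lp (fun _ : τ => ℂ) 2) →ₗ[ℂ] (τ → ℂ) where
  toFun f := f
  map_add' := lp.coeFn_add
  map_smul' := lp.coeFn_smul

lemma lpCoeLM_inj : Function.Injective (lpCoeLM (τ := τ)) := fun f g h => Subtype.ext h

noncomputable instance : FiniteDimensional ℂ (lp (fun _ : τ => ℂ) 2) :=
  FiniteDimensional.of_injective lpCoeLM lpCoeLM_inj

noncomputable def wgsLM (ψ : τ → τ) (w : τ → ℂ) :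
    (lp (fun _ : τ => ℂ) 2) →ₗ[ℂ] (lp (fun _ : τ => ℂ) 2) where
  toFun x := ⟨fun β => w β * x (ψ β), memℓp_gen (Summable.of_finite)⟩
  map_add' x y := by
    ext β
    simp [lp.coeFn_add, mul_add]
    rfl
  map_smul' c x := by
    ext β
    simp [lp.coeFn_smul, mul_comm, mul_left_comm]

noncomputable def wgsOp (ψ : τ → τ) (w : τ → ℂ) :
    (lp (fun _ : τ => ℂ) 2) →L[ℂ] (lp (fun _ : τ => ℂ) 2) :=
  LinearMap.toContinuousLinearMap (wgsLM ψ w)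

lemma wgsOp_apply (ψ : τ → τ) (w : τ → ℂ) (x : lp (fun _ : τ => ℂ) 2) (β : τ) :
    wgsOp ψ w x β = w β * x (ψ β) := rfl

end Aux

section Adj
variable {τ : Type*} [Fintype τ] [DecidableEq τ]

open ComplexConjugate

lemma adjoint_wgs (φ : τ → τ) (u : τ → ℂ)
    (T : (lp (fun _ : τ => ℂ) 2) →L[ℂ] (lp (fun _ : τ => ℂ) 2))
    (hT : ∀ x α, T x α = u α * x (φ α)) :
    ContinuousLinearMap.adjoint T
      = ∑ γ : τ, wgsOp (fun _ => γ) (fun β => if φ γ = β then conj (u γ) else 0) := by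
  symm
  rw [ContinuousLinearMap.eq_adjoint_iff]
  intro x y
  rw [lp.inner_eq_tsum, lp.inner_eq_tsum, tsum_fintype, tsum_fintype]
  simp only [ContinuousLinearMap.sum_apply, lp.coeFn_sum, Finset.sum_apply, wgsOp_apply,
    RCLike.inner_apply, hT]
  simp only [map_sum, Finset.sum_mul, apply_ite, map_mul, map_zero, ite_mul, zero_mul,
    starRingEnd_self_apply, Finset.mul_sum, mul_ite, mul_zero]
  rw [Finset.sum_comm]
  refine Finset.sum_congr rfl fun γ _ => ?_
  rw [Finset.sum_ite_eq (Finset.univ : Finset τ) (φ γ)]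
  simp only [Finset.mem_univ, if_true]
  ring

end Adj

section Main
open ComplexConjugate

variable {τ : Type*}

lemma isWGSOp_wgsOp [Fintype τ] (A : Set ℂ) (ψ : τ → τ) (w : τ → ℂ) (hw : ∀ β, w β ∈ A) :
    IsWGSOp A (wgsOp ψ w) :=
  ⟨ψ, w, hw, fun x β => wgsOp_apply ψ w x β⟩

lemma wgs_singleton_mem (A : Set ℂ) {T : lp (fun _ : τ => ℂ) 2 →L[ℂ] lp (fun _ : τ => ℂ) 2}
    (h : IsWGSOp A T) : T ∈ WGSSemigroup A :=
  ⟨1, fun _ => T, one_pos, fun _ => h, (Fin.sum_univ_one (fun _ => T)).symm⟩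

lemma wgs_add_mem (A : Set ℂ) {T₁ T₂ : lp (fun _ : τ => ℂ) 2 →L[ℂ] lp (fun _ : τ => ℂ) 2}
    (h₁ : T₁ ∈ WGSSemigroup A) (h₂ : T₂ ∈ WGSSemigroup A) : T₁ + T₂ ∈ WGSSemigroup A := by
  obtain ⟨m, S₁, hm, hS₁, rfl⟩ := h₁
  obtain ⟨n, S₂, hn, hS₂, rfl⟩ := h₂
  refine ⟨m + n, Fin.addCases S₁ S₂, by omega, fun i => ?_, ?_⟩
  · refine Fin.addCases (fun i => ?_) (fun i => ?_) i <;> simp [hS₁, hS₂]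
  · rw [Fin.sum_univ_add]
    simp

lemma wgs_sum_mem (A : Set ℂ) {ι : Type*} (s : Finset ι) (hs : s.Nonempty)
    (f : ι → (lp (fun _ : τ => ℂ) 2 →L[ℂ] lp (fun _ : τ => ℂ) 2))
    (hf : ∀ i ∈ s, f i ∈ WGSSemigroup A) : ∑ i ∈ s, f i ∈ WGSSemigroup A := by
  induction hs using Finset.Nonempty.cons_induction with
  | singleton i =>
      rw [Finset.sum_singleton]
      exact hf i (Finset.mem_singleton_self i)
  | cons i s his hs ih =>
      rw [Finset.sum_cons]
      exact wgs_add_mem A (hf i (by simp)) (ih fun j hj => hf j (by simp [hj]))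

end Main

/-- If `τ` is a nonempty finite index set and `A ⊆ ℂ` is nonempty and
conjugate invariant, then the additive semigroup generated by `A ∪ {0}`-weighted generalized
shift operators on `ℓ²(τ)` is adjoint invariant. -/
theorem wgs_semigroup_adjoint_invariant_of_finite {τ : Type*} [Nonempty τ] [Finite τ]
    (A : Set ℂ) (hA : A.Nonempty) (hconj : ∀ z ∈ A, (starRingEnd ℂ) z ∈ A) :
    ∀ T ∈ WGSSemigroup (τ := τ) (A ∪ {0}),
      ContinuousLinearMap.adjoint T ∈ WGSSemigroup (τ := τ) (A ∪ {0}) := by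
  cases nonempty_fintype τ
  classical
  rintro T ⟨m, S, hm, hS, rfl⟩
  rw [map_sum]
  refine wgs_sum_mem _ _ ⟨⟨0, hm⟩, Finset.mem_univ _⟩ _ fun i _ => ?_
  obtain ⟨φ, u, hu, happly⟩ := hS i
  rw [adjoint_wgs φ u (S i) happly]
  refine wgs_sum_mem _ _ ⟨Classical.arbitrary τ, Finset.mem_univ _⟩ _ fun γ _ => ?_
  refine wgs_singleton_mem _ (isWGSOp_wgsOp _ _ _ fun β => ?_)
  by_cases h : φ γ = β
  · simp only [h, if_true]
    rcases hu γ with hγ | hγ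
    · exact Or.inl (hconj _ hγ)
    · simp only [Set.mem_singleton_iff] at hγ
      simp [hγ]
  · simp [h]
end

section
/- Let τ be an infinite index set and let A ⊆ ℂ be nonempty and conjugate invariant (i.e., conj(λ) ∈ A for every λ ∈ A). Suppose 0 is a limit point of A, i.e., for every ε > 0 there exists z ∈ A with 0 < |z| < ε. Let S be the set of all finite sums of (A ∪ {0})-weighted generalized shift operators on ℓ²(τ). Then S is not adjoint invariant: there exists T ∈ S whose adjoint T* does not belong to S. -/
/-- If `τ` is infinite, `A ⊆ ℂ` is nonempty and conjugate invariant, and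
`0` is a limit point of `A`, then the additive semigroup generated by `A ∪ {0}`-weighted
generalized shift operators on `ℓ²(τ)` is *not* adjoint invariant. -/

theorem wgs_semigroup_not_adjoint_invariant_of_zero_limit {τ : Type*} [Infinite τ]
    (A : Set ℂ) (hA : A.Nonempty) (hconj : ∀ z ∈ A, (starRingEnd ℂ) z ∈ A)
    (h0 : ∀ ε : ℝ, 0 < ε → ∃ z ∈ A, 0 < ‖z‖ ∧ ‖z‖ < ε) :
    ∃ T ∈ WGSSemigroup (τ := τ) (A ∪ {0}),
      ContinuousLinearMap.adjoint T ∉ WGSSemigroup (τ := τ) (A ∪ {0}) := by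
  classical
  obtain ⟨f, hfinj⟩ : ∃ f : ℕ → τ, Function.Injective f :=
    ⟨(Infinite.natEmbedding τ), (Infinite.natEmbedding τ).injective⟩
  have hz : ∀ n : ℕ, ∃ z ∈ A, 0 < ‖z‖ ∧ ‖z‖ < (1/2 : ℝ)^n := fun n => h0 _ (by positivity)
  choose z hzA hz0 hzlt using hz
  set α₀ : τ := f 0 with hα₀
  set w : τ → ℂ := Function.extend f z (fun _ => 0) with hw
  have hwf : ∀ n, w (f n) = z n := fun n => hfinj.extend_apply z _ n
  have hwn : ∀ α, α ∉ Set.range f → w α = 0 := by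
    intro α hα
    exact Function.extend_apply' z _ _ (by simpa [Set.range] using hα)
  -- membership in A ∪ {0}
  have hwA : ∀ α, w α ∈ A ∪ {0} := by
    intro α
    by_cases h : α ∈ Set.range f
    · obtain ⟨n, rfl⟩ := h
      exact Or.inl (hwf n ▸ hzA n)
    · simp [hwn α h]
  -- w is in ℓ²
  have hwmem : Memℓp w 2 := by
    apply memℓp_gen
    have h2 : (2 : ENNReal).toReal = 2 := by simp
    rw [h2]
    have hgeo : Summable fun n : ℕ => (1/4:ℝ)^n :=
      summable_geometric_of_lt_one (by norm_num) (by norm_num)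
    have hsum : Summable fun n : ℕ => ‖w (f n)‖ ^ (2:ℝ) := by
      refine hgeo.of_nonneg_of_le (fun n => by positivity) fun n => ?_
      have h1 : ‖w (f n)‖ ^ (2:ℝ) = ‖w (f n)‖ ^ (2:ℕ) := by
        rw [← Real.rpow_natCast]; norm_num
      rw [h1, hwf]
      calc ‖z n‖ ^ 2 ≤ ((1/2:ℝ)^n) ^ 2 :=
            pow_le_pow_left₀ (norm_nonneg _) (le_of_lt (hzlt n)) 2
        _ = (1/4:ℝ)^n := by rw [← pow_mul, pow_mul']; norm_num
    refine (hfinj.summable_iff ?_).mp hsum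
    intro α hα
    rw [hwn α hα]
    simp [Real.zero_rpow]
  set W : lp (fun _ : τ => ℂ) 2 := ⟨w, hwmem⟩ with hW
  have hWapp : ∀ α, (W : ∀ _ : τ, ℂ) α = w α := fun α => rfl
  set e : lp (fun _ : τ => ℂ) 2 := lp.single 2 α₀ (1:ℂ) with he
  set c : lp (fun _ : τ => ℂ) 2 →L[ℂ] ℂ := innerSL ℂ e with hc
  have hcx : ∀ x : lp (fun _ : τ => ℂ) 2, c x = x α₀ := by
    intro x
    have := lp.inner_single_left (𝕜 := ℂ) (G := fun _ : τ => ℂ) α₀ (1:ℂ) x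
    simp only [hc, innerSL_apply_apply, he, this]
    simp [RCLike.inner_apply]
  set T : lp (fun _ : τ => ℂ) 2 →L[ℂ] lp (fun _ : τ => ℂ) 2 := c.smulRight W with hT
  have hTapp : ∀ (x : lp (fun _ : τ => ℂ) 2) (α : τ), T x α = w α * x α₀ := by
    intro x α
    have : T x = c x • W := rfl
    rw [this, hcx]
    have : (((x α₀ : ℂ) • W : lp (fun _ : τ => ℂ) 2) : ∀ _ : τ, ℂ) α = (x α₀) • (W α) := by
      rw [lp.coeFn_smul]; rfl
    rw [this, hWapp, smul_eq_mul, mul_comm]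
  have hTwgs : IsWGSOp (A ∪ {0}) T :=
    ⟨fun _ => α₀, w, hwA, fun x α => hTapp x α⟩
  refine ⟨T, ⟨1, fun _ => T, Nat.one_pos, fun _ => hTwgs, by rw [Fin.sum_univ_one]⟩, ?_⟩
  rintro ⟨m, S, hm, hS, hsum⟩
  choose φ u huA hSapp using hS
  -- key: (T* x) α₀ = ⟪W, x⟫
  have hadj : ∀ x : lp (fun _ : τ => ℂ) 2, (ContinuousLinearMap.adjoint T x) α₀ = @inner ℂ _ _ W x := by
    intro x
    have h1 : @inner ℂ _ _ e (ContinuousLinearMap.adjoint T x) =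
        (ContinuousLinearMap.adjoint T x) α₀ := by
      rw [he, lp.inner_single_left]
      simp [RCLike.inner_apply]
    have h2 : @inner ℂ _ _ e (ContinuousLinearMap.adjoint T x) = @inner ℂ _ _ (T e) x :=
      ContinuousLinearMap.adjoint_inner_right T e x
    have h3 : T e = W := by
      have : T e = c e • W := rfl
      rw [this, hcx]
      have : (e : ∀ _ : τ, ℂ) α₀ = 1 := by
        rw [he]; exact lp.single_apply_self (E := fun _ : τ => ℂ) 2 α₀ (1:ℂ)
      rw [this, one_smul]
    rw [← h1, h2, h3]
  -- choose n with f n avoiding all φ i α₀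
  have hpre : {n : ℕ | f n ∈ (Finset.univ.image (fun i => φ i α₀) : Finset τ)}.Finite := by
    apply Set.Finite.preimage hfinj.injOn (Finset.finite_toSet _)
  obtain ⟨n, hn⟩ := hpre.infinite_compl.nonempty
  have hnφ : ∀ i, φ i α₀ ≠ f n := by
    intro i hi
    exact hn (show f n ∈ _ from Finset.mem_image.mpr ⟨i, Finset.mem_univ i, hi⟩)
  set x : lp (fun _ : τ => ℂ) 2 := lp.single 2 (f n) (1:ℂ) with hx
  have hL : (ContinuousLinearMap.adjoint T x) α₀ = (starRingEnd ℂ) (z n) := by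
    rw [hadj, hW]
    have := lp.inner_single_right (𝕜 := ℂ) (G := fun _ : τ => ℂ) (f n) (1:ℂ) W
    rw [hx, this]
    simp [RCLike.inner_apply, hWapp, hwf]
  have hR : (ContinuousLinearMap.adjoint T x) α₀ = 0 := by
    rw [hsum]
    have h1 : ((∑ i, S i) x : ∀ _ : τ, ℂ) α₀ = ∑ i, (S i x : ∀ _ : τ, ℂ) α₀ := by
      rw [ContinuousLinearMap.sum_apply, lp.coeFn_sum, Finset.sum_apply]
    rw [h1]
    apply Finset.sum_eq_zero
    intro i _
    rw [hSapp i x α₀]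
    have : (x : ∀ _ : τ, ℂ) (φ i α₀) = 0 := by
      rw [hx]; exact lp.single_apply_ne (E := fun _ : τ => ℂ) 2 (f n) (1:ℂ) (hnφ i)
    rw [this, mul_zero]
  rw [hL] at hR
  have : z n ≠ 0 := by
    intro h; have := hz0 n; rw [h] at this; simp at this
  exact this (by simpa using congrArg (starRingEnd ℂ) hR)
end

section
/- Let τ be a nonempty index set and φ : τ → τ a self-map such that the generalized shift σ_φ maps ℓ²(τ) into ℓ²(τ). Then the adjoint (σ_φ|_{ℓ²(τ)})* is a finite sum of {0,1}-weighted generalized shift operators on ℓ²(τ): there exist finitely many self-maps η_1, ..., η_m : τ → τ and weight vectors u_1, ..., u_m : τ → {0,1} such that each σ_{η_i,u_i} maps ℓ²(τ) into ℓ²(τ) and (σ_φ|_{ℓ²(τ)})* = Σ_{i=1}^m σ_{η_i,u_i}|_{ℓ²(τ)}. -/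
open scoped ComplexConjugate ENNReal NNReal
open ContinuousLinearMap

local notation "⟪" x ", " y "⟫" => @inner ℂ _ _ x y

set_option maxHeartbeats 1000000 in
/-- The adjoint of a bounded generalized shift operator `σ_φ|_{ℓ²(τ)}` is a
finite sum of `{0,1}`-weighted generalized shift operators on `ℓ²(τ)`. -/
theorem generalized_shift_adjoint_finite_sum {τ : Type*} [Nonempty τ] (φ : τ → τ)
    (T : lp (fun _ : τ => ℂ) 2 →L[ℂ] lp (fun _ : τ => ℂ) 2)
    (hT : ∀ (x : lp (fun _ : τ => ℂ) 2) (α : τ), T x α = x (φ α)) :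
    ∃ (m : ℕ) (S : Fin m → (lp (fun _ : τ => ℂ) 2 →L[ℂ] lp (fun _ : τ => ℂ) 2))
      (η : Fin m → τ → τ) (u : Fin m → τ → ℂ),
      (∀ i α, u i α ∈ ({0, 1} : Set ℂ)) ∧
      (∀ i (x : lp (fun _ : τ => ℂ) 2) (α : τ), S i x α = u i α * x (η i α)) ∧
      ContinuousLinearMap.adjoint T = ∑ i, S i := by
  classical
  have hp2 : (0:ℝ) < (2:ℝ≥0∞).toReal := by norm_num
  -- the image of a basis vector
  set e : τ → lp (fun _ : τ => ℂ) 2 := fun α => lp.single 2 α (1:ℂ) with he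
  have hTe : ∀ α β, (T (e α)) β = if φ β = α then (1:ℂ) else 0 := by
    intro α β
    rw [hT, he]
    by_cases h : φ β = α
    · simp [h, lp.single_apply_self]
    · simp [lp.single_apply_ne _ _ _ h, h]
  -- fibers are finite
  have hfin : ∀ α : τ, (φ ⁻¹' {α}).Finite := by
    intro α
    have hs : Summable fun β => ‖(T (e α)) β‖ ^ (2:ℝ≥0∞).toReal :=
      (lp.memℓp (T (e α))).summable hp2
    have hten := hs.tendsto_cofinite_zero
    have hev : ∀ᶠ β in Filter.cofinite, ‖(T (e α)) β‖ ^ (2:ℝ≥0∞).toReal < 1 :=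
      hten.eventually_lt_const one_pos
    refine Set.Finite.subset (Filter.eventually_cofinite.mp hev) ?_
    intro β hβ
    simp only [Set.mem_setOf_eq, not_lt]
    rw [hTe α β, if_pos (show φ β = α from hβ)]
    norm_num
  -- cardinality bound for fibers
  set m : ℕ := ⌈‖T‖ ^ 2⌉₊ with hm
  have hcard : ∀ α : τ, ∀ s : Finset τ, (↑s : Set τ) ⊆ φ ⁻¹' {α} → s.card ≤ m := by
    intro α s hs
    have h1 : (s.card : ℝ) = ∑ β ∈ s, ‖(T (e α)) β‖ ^ (2:ℝ≥0∞).toReal := by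
      have : ∀ β ∈ s, ‖(T (e α)) β‖ ^ (2:ℝ≥0∞).toReal = 1 := by
        intro β hβ
        rw [hTe α β, if_pos (show φ β = α from hs hβ)]
        norm_num
      rw [Finset.sum_congr rfl this]
      simp
    have h2 : ∑ β ∈ s, ‖(T (e α)) β‖ ^ (2:ℝ≥0∞).toReal ≤ ‖T (e α)‖ ^ (2:ℝ≥0∞).toReal :=
      lp.sum_rpow_le_norm_rpow hp2 _ s
    have h3 : ‖T (e α)‖ ≤ ‖T‖ := by
      have h := T.le_opNorm (e α)
      have hn : ‖e α‖ = 1 := by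
        have := lp.norm_single (E := fun _ : τ => ℂ) (p := 2) (by norm_num) α (1:ℂ)
        simpa [he] using this
      rwa [hn, mul_one] at h
    have h4 : ‖T (e α)‖ ^ (2:ℝ≥0∞).toReal ≤ ‖T‖ ^ (2:ℝ) := by
      have : (2:ℝ≥0∞).toReal = (2:ℝ) := by norm_num
      rw [this]
      exact Real.rpow_le_rpow (norm_nonneg _) h3 (by norm_num)
    have h5 : (s.card : ℝ) ≤ ‖T‖ ^ 2 := by
      have := (h1.le.trans h2).trans h4
      rwa [Real.rpow_two] at this
    have h6 : (s.card : ℝ) ≤ (m : ℝ) := h5.trans (Nat.le_ceil _)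
    exact_mod_cast h6
  -- m ≥ 1
  have hm1 : 1 ≤ m := by
    obtain ⟨c⟩ := (inferInstance : Nonempty τ)
    have := hcard (φ c) {c} (by simp)
    simpa using this
  haveI : Inhabited (Fin m) := ⟨⟨0, hm1⟩⟩
  -- enumerations of the fibers
  have hembed : ∀ α : τ, ∃ g : τ → Fin m, Set.InjOn g (φ ⁻¹' {α}) := by
    intro α
    haveI := (hfin α).fintype
    have hc : Fintype.card (φ ⁻¹' {α} : Set τ) ≤ Fintype.card (Fin m) := by
      rw [Fintype.card_fin, ← Set.toFinset_card]
      exact hcard α _ (by simp)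
    obtain ⟨g0⟩ := Function.Embedding.nonempty_of_card_le hc
    refine ⟨fun β => if h : β ∈ φ ⁻¹' {α} then g0 ⟨β, h⟩ else default, ?_⟩
    intro β hβ β' hβ' hgg
    simp only [dif_pos hβ, dif_pos hβ'] at hgg
    exact congrArg Subtype.val (g0.injective hgg)
  choose g hg using hembed
  set idx : τ → Fin m := fun β => g (φ β) β with hidx_def
  have hidx : ∀ β β', φ β = φ β' → idx β = idx β' → β = β' := by
    intro β β' hφ hi
    have h1 : β ∈ φ ⁻¹' {φ β} := rfl
    have h2 : β' ∈ φ ⁻¹' {φ β} := by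
      simp only [Set.mem_preimage, Set.mem_singleton_iff]
      exact hφ.symm
    apply hg (φ β) h1 h2
    have h3 : idx β' = g (φ β) β' := by rw [hidx_def]; simp only; rw [← hφ]
    rw [← h3]
    exact hi
  -- the adjoint data
  set P : Fin m → τ → Prop := fun i α => ∃ β, φ β = α ∧ idx β = i with hP
  set η : Fin m → τ → τ := fun i α => if h : P i α then h.choose else Classical.arbitrary τ
    with hη
  set u : Fin m → τ → ℂ := fun i α => if P i α then 1 else 0 with hu
  have hηspec : ∀ i α, P i α → φ (η i α) = α ∧ idx (η i α) = i := by
    intro i α h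
    rw [hη]
    simp only [dif_pos h]
    exact h.choose_spec
  -- the weighted shifts on the domain side
  have hpt : ∀ (i : Fin m) (x : lp (fun _ : τ => ℂ) 2) (β : τ),
      ‖(if idx β = i then (1:ℂ) else 0) * x (φ β)‖ ^ (2:ℝ≥0∞).toReal
        ≤ ‖(T x) β‖ ^ (2:ℝ≥0∞).toReal := by
    intro i x β
    apply Real.rpow_le_rpow (norm_nonneg _) ?_ (le_of_lt hp2)
    rw [hT x β, norm_mul]
    by_cases h : idx β = i <;> simp [h]
  have hmem : ∀ (i : Fin m) (x : lp (fun _ : τ => ℂ) 2),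
      Memℓp (fun β => (if idx β = i then (1:ℂ) else 0) * x (φ β)) 2 := by
    intro i x
    apply memℓp_gen
    exact Summable.of_nonneg_of_le (fun β => Real.rpow_nonneg (norm_nonneg _) _)
      (fun β => hpt i x β) ((lp.memℓp (T x)).summable hp2)
  set A : Fin m → (lp (fun _ : τ => ℂ) 2 →L[ℂ] lp (fun _ : τ => ℂ) 2) := fun i =>
    LinearMap.mkContinuous
      { toFun := fun x => ⟨fun β => (if idx β = i then (1:ℂ) else 0) * x (φ β), hmem i x⟩
        map_add' := by
          intro x y
          apply lp.ext
          funext β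
          show (if idx β = i then (1:ℂ) else 0) * ((x + y) : lp (fun _ : τ => ℂ) 2) (φ β)
            = (if idx β = i then (1:ℂ) else 0) * x (φ β)
              + (if idx β = i then (1:ℂ) else 0) * y (φ β)
          rw [lp.coeFn_add, Pi.add_apply, mul_add]
        map_smul' := by
          intro c x
          apply lp.ext
          funext β
          show (if idx β = i then (1:ℂ) else 0) * ((c • x) : lp (fun _ : τ => ℂ) 2) (φ β)
            = c * ((if idx β = i then (1:ℂ) else 0) * x (φ β))
          rw [lp.coeFn_smul, Pi.smul_apply, smul_eq_mul]
          ring }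
      ‖T‖
      (by
        intro x
        refine lp.norm_le_of_forall_sum_le hp2 (mul_nonneg (norm_nonneg T) (norm_nonneg x))
          (fun s => ?_)
        calc ∑ β ∈ s, ‖(if idx β = i then (1:ℂ) else 0) * x (φ β)‖ ^ (2:ℝ≥0∞).toReal
            ≤ ∑ β ∈ s, ‖(T x) β‖ ^ (2:ℝ≥0∞).toReal :=
              Finset.sum_le_sum (fun β _ => hpt i x β)
          _ ≤ ‖T x‖ ^ (2:ℝ≥0∞).toReal := lp.sum_rpow_le_norm_rpow hp2 _ s
          _ ≤ (‖T‖ * ‖x‖) ^ (2:ℝ≥0∞).toReal :=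
              Real.rpow_le_rpow (norm_nonneg _) (T.le_opNorm x) (le_of_lt hp2))
    with hA
  have hAapp : ∀ (i : Fin m) (x : lp (fun _ : τ => ℂ) 2) (β : τ),
      (A i x) β = (if idx β = i then (1:ℂ) else 0) * x (φ β) := fun i x β => rfl
  -- the sum of the A i is T
  have hsum : ∑ i, A i = T := by
    apply ContinuousLinearMap.ext
    intro x
    apply lp.ext
    funext α
    have h1 : ((∑ i, A i) x : ∀ _ : τ, ℂ) α = ∑ i, (A i x) α := by
      rw [ContinuousLinearMap.sum_apply, lp.coeFn_sum, Finset.sum_apply]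
    rw [h1, hT x α]
    simp only [hAapp]
    rw [← Finset.sum_mul]
    simp
  -- conclusion
  have hadj : ContinuousLinearMap.adjoint T = ∑ i, ContinuousLinearMap.adjoint (A i) := by
    rw [← hsum, map_sum]
  refine ⟨m, fun i => ContinuousLinearMap.adjoint (A i), η, u, ?_, ?_, hadj⟩
  · intro i α
    rw [hu]
    by_cases h : P i α <;> simp [h]
  · intro i x α
    have h1 : (ContinuousLinearMap.adjoint (A i) x) α
        = ⟪A i (e α), x⟫ := by
      rw [← ContinuousLinearMap.adjoint_inner_right]
      have h2 := lp.inner_single_left (𝕜 := ℂ) α (1:ℂ) (ContinuousLinearMap.adjoint (A i) x)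
      rw [RCLike.inner_apply] at h2
      simp only [map_one, one_mul, mul_one] at h2
      rw [he]
      exact h2.symm
    rw [h1, lp.inner_eq_tsum]
    simp only [RCLike.inner_apply]
    have hterm : ∀ β : τ, x β * conj ((A i (e α)) β)
        = (if idx β = i ∧ φ β = α then (1:ℂ) else 0) * x β := by
      intro β
      rw [hAapp]
      have h3 : (e α : ∀ _ : τ, ℂ) (φ β) = if φ β = α then 1 else 0 := by
        rw [he]
        by_cases h : φ β = α
        · simp [h, lp.single_apply_self]
        · simp [lp.single_apply_ne _ _ _ h, h]
      rw [h3]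
      by_cases h4 : idx β = i <;> by_cases h5 : φ β = α <;> simp [h4, h5]
    simp only [hterm]
    by_cases h : P i α
    · obtain ⟨hφ0, hidx0⟩ := hηspec i α h
      rw [tsum_eq_single (η i α) ?_]
      · rw [if_pos ⟨hidx0, hφ0⟩, one_mul]
        simp only [hu]
        rw [if_pos h, one_mul]
      · intro β hβ
        by_cases h6 : idx β = i ∧ φ β = α
        · exact absurd (hidx β (η i α) (by rw [h6.2, hφ0]) (by rw [h6.1, hidx0])) hβ
        · rw [if_neg h6, zero_mul]
    · have hz : ∀ β : τ, (if idx β = i ∧ φ β = α then (1:ℂ) else 0) * x β = 0 := by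
        intro β
        by_cases h6 : idx β = i ∧ φ β = α
        · exact absurd ⟨β, h6.2, h6.1⟩ h
        · rw [if_neg h6, zero_mul]
      rw [tsum_congr hz, tsum_zero]
      simp only [hu]
      rw [if_neg h, zero_mul]
end

section
/- Let τ be a nonempty index set and let A = {0,1} ⊆ ℂ. Let S be the set of all finite sums of {0,1}-weighted generalized shift operators on ℓ²(τ). Then S is adjoint invariant: for every T ∈ S, the adjoint T* belongs to S. -/
open scoped ComplexConjugate ENNReal

set_option maxHeartbeats 1000000

section Aux

variable {τ : Type*}

lemma wgs_exists_shift [Nonempty τ] (ψ : τ → τ) (w : τ → ℂ)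
    (hw : ∀ β, w β = 0 ∨ w β = 1)
    (hinj : ∀ β β', w β = 1 → w β' = 1 → ψ β = ψ β' → β = β') :
    ∃ T : lp (fun _ : τ => ℂ) 2 →L[ℂ] lp (fun _ : τ => ℂ) 2,
      ∀ (x : lp (fun _ : τ => ℂ) 2) (β : τ), T x β = w β * x (ψ β) := by
  have hp : (0:ℝ) < (2 : ℝ≥0∞).toReal := by norm_num
  set S : Set τ := {β | w β = 1} with hS
  have he : Function.Injective (fun b : S => ψ (b : τ)) := by
    rintro ⟨b, hb⟩ ⟨b', hb'⟩ h
    exact Subtype.ext (hinj b b' hb hb' h)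
  have hF0 : ∀ (x : lp (fun _ : τ => ℂ) 2) β, β ∉ S →
      ‖w β * x (ψ β)‖ ^ (2 : ℝ≥0∞).toReal = 0 := by
    intro x β hβ
    rcases hw β with h | h
    · simp [h, Real.zero_rpow hp.ne']
    · exact absurd h hβ
  have hsum : ∀ x : lp (fun _ : τ => ℂ) 2,
      Summable (fun β => ‖w β * x (ψ β)‖ ^ (2 : ℝ≥0∞).toReal) := by
    intro x
    have hg : Summable (fun α => ‖x α‖ ^ (2 : ℝ≥0∞).toReal) :=
      (memℓp_gen_iff hp).mp (lp.memℓp x)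
    have h1 : Summable (fun b : S => ‖w (b:τ) * x (ψ (b:τ))‖ ^ (2 : ℝ≥0∞).toReal) := by
      have := hg.comp_injective he
      refine this.congr fun b => ?_
      have hb : w (b:τ) = 1 := b.2
      simp [hb]
    rw [← Set.indicator_eq_self.mpr
      (Function.support_subset_iff'.mpr (hF0 x) : Function.support _ ⊆ S)] at *
    exact summable_subtype_iff_indicator.mp h1
  have hmem : ∀ x : lp (fun _ : τ => ℂ) 2,
      Memℓp (fun β => w β * x (ψ β)) 2 := fun x => memℓp_gen (hsum x)
  let L : lp (fun _ : τ => ℂ) 2 →ₗ[ℂ] lp (fun _ : τ => ℂ) 2 :=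
    { toFun := fun x => ⟨fun β => w β * x (ψ β), hmem x⟩
      map_add' := by
        intro x y; apply lp.ext; funext β
        simp [lp.coeFn_add, mul_add]
        rfl
      map_smul' := by
        intro c x; apply lp.ext; funext β
        simp [lp.coeFn_smul]
        ring }
  have hbound : ∀ x, ‖L x‖ ≤ 1 * ‖x‖ := by
    intro x
    rw [one_mul]
    have h2 : ‖L x‖ ^ (2 : ℝ≥0∞).toReal ≤ ‖x‖ ^ (2 : ℝ≥0∞).toReal := by
      rw [lp.norm_rpow_eq_tsum hp, lp.norm_rpow_eq_tsum hp]
      have hts : (∑' β, ‖L x β‖ ^ (2 : ℝ≥0∞).toReal)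
          = ∑' b : S, ‖w (b:τ) * x (ψ (b:τ))‖ ^ (2 : ℝ≥0∞).toReal := by
        rw [tsum_subtype S (fun β => ‖w β * x (ψ β)‖ ^ (2 : ℝ≥0∞).toReal)]
        refine tsum_congr fun β => ?_
        by_cases hβ : β ∈ S
        · rw [Set.indicator_of_mem hβ]; rfl
        · rw [Set.indicator_of_notMem hβ]
          exact (hF0 x β hβ)
      rw [hts]
      refine Summable.tsum_le_tsum_of_inj (fun b : S => ψ (b:τ)) he
        (fun c _ => Real.rpow_nonneg (norm_nonneg _) _)
        (fun b => ?_) ?_ ((memℓp_gen_iff hp).mp (lp.memℓp x))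
      · have hb : w (b:τ) = 1 := b.2
        simp [hb]
      · refine (((memℓp_gen_iff hp).mp (lp.memℓp x)).comp_injective he).congr fun b => ?_
        have hb : w (b:τ) = 1 := b.2
        simp [hb]
    have h2' : ‖L x‖ ^ (2:ℕ) ≤ ‖x‖ ^ (2:ℕ) := by
      have ht : (2 : ℝ≥0∞).toReal = ((2:ℕ):ℝ) := by norm_num
      rw [ht, Real.rpow_natCast, Real.rpow_natCast] at h2
      exact_mod_cast h2
    exact (pow_le_pow_iff_left₀ (norm_nonneg _) (norm_nonneg _) (by norm_num)).mp h2'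
  exact ⟨L.mkContinuous 1 hbound, fun x β => rfl⟩

lemma wgs_adjoint_single [Nonempty τ]
    (T : lp (fun _ : τ => ℂ) 2 →L[ℂ] lp (fun _ : τ => ℂ) 2)
    (hT : IsWGSOp ({0, 1} : Set ℂ) T) :
    ContinuousLinearMap.adjoint T ∈ WGSSemigroup (τ := τ) ({0, 1} : Set ℂ) := by
  classical
  obtain ⟨φ, u, hu, hTapp⟩ := hT
  have hp : (0:ℝ) < (2 : ℝ≥0∞).toReal := by norm_num
  have hu' : ∀ α, u α = 0 ∨ u α = 1 := fun α => by
    simpa [Set.mem_insert_iff] using hu α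
  -- `T (single β 1)` vanishes outside the fiber of `β`
  have hz0 : ∀ (β α : τ), ¬(φ α = β ∧ u α = 1) → T (lp.single 2 β (1:ℂ)) α = 0 := by
    intro β α hα
    rcases hu' α with h | h
    · simp [hTapp, h]
    · have hne : φ α ≠ β := fun hc => hα ⟨hc, h⟩
      rw [hTapp, lp.single_apply_ne 2 β _ hne, mul_zero]
  have hz1 : ∀ (β α : τ), φ α = β → u α = 1 → T (lp.single 2 β (1:ℂ)) α = 1 := by
    intro β α h1 h2
    rw [hTapp, h1, h2, lp.single_apply_self, one_mul]
  -- fibers are finite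
  have hfin : ∀ β : τ, {α | φ α = β ∧ u α = 1}.Finite := by
    intro β
    have hsum : Summable (fun α => ‖T (lp.single 2 β (1:ℂ)) α‖ ^ (2 : ℝ≥0∞).toReal) :=
      (memℓp_gen_iff hp).mp (lp.memℓp _)
    have hone : Summable (fun _ : {α | φ α = β ∧ u α = 1} => (1:ℝ)) := by
      refine (hsum.comp_injective Subtype.coe_injective).congr fun a => ?_
      have ha := hz1 β a a.2.1 a.2.2
      simp [Function.comp, ha]
    exact Set.finite_coe_iff.mp (Finite.of_summable_const one_pos hone)
  set s : τ → Finset τ := fun β => (hfin β).toFinset with hs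
  have hmem_s : ∀ {β α}, α ∈ s β ↔ (φ α = β ∧ u α = 1) := fun {β α} =>
    (hfin β).mem_toFinset
  -- uniform cardinality bound
  set N : ℕ := ⌈‖T‖ ^ 2⌉₊ + 1 with hN
  have hcard : ∀ β, (s β).card ≤ N := by
    intro β
    set sg : lp (fun _ : τ => ℂ) 2 := lp.single 2 β (1:ℂ) with hsg
    have hns : ‖sg‖ = 1 := by
      rw [hsg]
      simpa using lp.norm_single hp (fun _ : τ => (1:ℂ)) β
    have hnorm : ‖T sg‖ ≤ ‖T‖ := by
      calc ‖T sg‖ ≤ ‖T‖ * ‖sg‖ := T.le_opNorm _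
      _ = ‖T‖ := by rw [hns, mul_one]
    have hz2 : (((s β).card : ℝ))
        = ‖T sg‖ ^ (2 : ℝ≥0∞).toReal := by
      rw [hsg]
      rw [lp.norm_rpow_eq_tsum hp, tsum_eq_sum (s := s β)
        (fun α hα => by
          rw [hz0 β α (fun hc => hα (hmem_s.mpr hc))]
          simp [Real.zero_rpow hp.ne'])]
      rw [Finset.sum_congr rfl (fun α hα => by
        rw [hz1 β α (hmem_s.mp hα).1 (hmem_s.mp hα).2]
        simp : ∀ α ∈ s β, ‖T (lp.single 2 β (1:ℂ)) α‖ ^ (2 : ℝ≥0∞).toReal = 1)]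
      simp
    have hle : (((s β).card : ℝ)) ≤ ‖T‖ ^ 2 := by
      rw [hz2]
      have ht : (2 : ℝ≥0∞).toReal = ((2:ℕ):ℝ) := by norm_num
      rw [ht, Real.rpow_natCast]
      exact pow_le_pow_left₀ (norm_nonneg _) hnorm 2
    have : (s β).card ≤ ⌈‖T‖ ^ 2⌉₊ :=
      Nat.cast_le.mp (le_trans (by exact_mod_cast hle) (Nat.le_ceil _))
    omega
  -- the family of shifts
  let ψ : Fin N → τ → τ := fun i β =>
    if h : (i : ℕ) < (s β).card then ((s β).equivFin.symm ⟨i, h⟩ : τ)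
    else Classical.arbitrary τ
  let w : Fin N → τ → ℂ := fun i β => if (i : ℕ) < (s β).card then 1 else 0
  have hw : ∀ i β, w i β = 0 ∨ w i β = 1 := by
    intro i β; by_cases h : (i : ℕ) < (s β).card <;> simp [w, h]
  have hψ_mem : ∀ (i : Fin N) β (h : (i : ℕ) < (s β).card),
      φ (ψ i β) = β ∧ u (ψ i β) = 1 := by
    intro i β h
    have := ((s β).equivFin.symm ⟨i, h⟩).2
    have h2 := hmem_s.mp this
    simpa [ψ, dif_pos h] using h2
  have hinj : ∀ i β β', w i β = 1 → w i β' = 1 → ψ i β = ψ i β' → β = β' := by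
    intro i β β' hb hb' heq
    have h : (i : ℕ) < (s β).card := by
      by_contra hc; simp [w, hc] at hb
    have h' : (i : ℕ) < (s β').card := by
      by_contra hc; simp [w, hc] at hb'
    have e1 := (hψ_mem i β h).1
    have e2 := (hψ_mem i β' h').1
    rw [← e1, ← e2, heq]
  choose Top hTop using fun i : Fin N => wgs_exists_shift (ψ i) (w i) (hw i) (hinj i)
  -- the key pointwise identity
  have key : ∀ (y : lp (fun _ : τ => ℂ) 2) (β : τ),
      (∑ i : Fin N, w i β * y (ψ i β)) = ∑ α ∈ s β, y α := by
    intro y β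
    have hrhs : (∑ α ∈ s β, y α) = ∑ j : Fin (s β).card, y ((s β).equivFin.symm j : τ) := by
      rw [← Finset.sum_coe_sort (s β) (fun α => y α)]
      exact (Equiv.sum_comp (s β).equivFin.symm (fun a => y (a : τ))).symm
    rw [hrhs]
    have hlhs : ∀ i : Fin N, w i β * y (ψ i β)
        = if h : (i : ℕ) < (s β).card then y ((s β).equivFin.symm ⟨i, h⟩ : τ) else 0 := by
      intro i
      by_cases h : (i : ℕ) < (s β).card
      · simp [w, ψ, h]
      · simp [w, ψ, h]
    rw [Finset.sum_congr rfl (fun i _ => hlhs i)]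
    let f : ℕ → ℂ := fun n =>
      if h : n < (s β).card then y ((s β).equivFin.symm ⟨n, h⟩ : τ) else 0
    have h1 : (∑ i : Fin N, if h : (i : ℕ) < (s β).card
        then y ((s β).equivFin.symm ⟨i, h⟩ : τ) else 0) = ∑ n ∈ Finset.range N, f n :=
      Fin.sum_univ_eq_sum_range f N
    have h2 : (∑ n ∈ Finset.range N, f n) = ∑ n ∈ Finset.range (s β).card, f n := by
      refine (Finset.sum_subset (Finset.range_subset_range.mpr (hcard β)) ?_).symm
      intro n _ hn
      rw [Finset.mem_range, not_lt] at hn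
      simp [f, Nat.not_lt.mpr hn]
    have h3 : (∑ n ∈ Finset.range (s β).card, f n)
        = ∑ j : Fin (s β).card, y ((s β).equivFin.symm j : τ) := by
      rw [← Fin.sum_univ_eq_sum_range f ((s β).card)]
      refine Finset.sum_congr rfl fun j _ => ?_
      simp [f, j.isLt]
    rw [h1, h2, h3]
  -- adjoint formula
  have hadj : ∀ (y : lp (fun _ : τ => ℂ) 2) (β : τ),
      (ContinuousLinearMap.adjoint T y) β = ∑ α ∈ s β, y α := by
    intro y β
    have h1 : (ContinuousLinearMap.adjoint T y) β
        = inner (𝕜 := ℂ) (lp.single 2 β (1:ℂ)) (ContinuousLinearMap.adjoint T y) := by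
      rw [lp.inner_single_left]; simp [inner]
    rw [h1, ContinuousLinearMap.adjoint_inner_right, lp.inner_eq_tsum]
    rw [tsum_eq_sum (s := s β) (fun α hα => by
      rw [hz0 β α (fun hc => hα (hmem_s.mpr hc))]
      simp)]
    refine Finset.sum_congr rfl fun α hα => ?_
    rw [hz1 β α (hmem_s.mp hα).1 (hmem_s.mp hα).2]
    simp [RCLike.inner_apply]
  -- conclude
  refine ⟨N, Top, Nat.succ_pos _, fun i => ⟨ψ i, w i, fun β => ?_, hTop i⟩, ?_⟩
  · rcases hw i β with h | h <;> simp [h]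
  · apply ContinuousLinearMap.ext; intro y
    apply lp.ext; funext β
    have hsumapp : ((∑ i : Fin N, Top i) y) β = ∑ i : Fin N, (Top i y) β := by
      rw [ContinuousLinearMap.sum_apply, lp.coeFn_sum, Finset.sum_apply]
    rw [hadj y β, hsumapp, ← key y β]
    exact Finset.sum_congr rfl fun i _ => (hTop i y β).symm

lemma wgs_mem_add [Nonempty τ] {A : Set ℂ}
    {T T' : lp (fun _ : τ => ℂ) 2 →L[ℂ] lp (fun _ : τ => ℂ) 2}
    (hT : T ∈ WGSSemigroup (τ := τ) A) (hT' : T' ∈ WGSSemigroup (τ := τ) A) :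
    T + T' ∈ WGSSemigroup (τ := τ) A := by
  obtain ⟨m, S, hm, hS, rfl⟩ := hT
  obtain ⟨m', S', hm', hS', rfl⟩ := hT'
  refine ⟨m + m', Fin.append S S', by omega, ?_, ?_⟩
  · intro i
    refine Fin.addCases (fun j => ?_) (fun j => ?_) i
    · rw [Fin.append_left]; exact hS j
    · rw [Fin.append_right]; exact hS' j
  · rw [Fin.sum_univ_add]
    congr 1
    · exact Finset.sum_congr rfl fun j _ => (Fin.append_left S S' j).symm
    · exact Finset.sum_congr rfl fun j _ => (Fin.append_right S S' j).symm

lemma wgs_sum_mem_s12 [Nonempty τ] {A : Set ℂ} :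
    ∀ (m : ℕ), 0 < m →
      ∀ (f : Fin m → (lp (fun _ : τ => ℂ) 2 →L[ℂ] lp (fun _ : τ => ℂ) 2)),
      (∀ i, f i ∈ WGSSemigroup (τ := τ) A) → (∑ i, f i) ∈ WGSSemigroup (τ := τ) A := by
  intro m
  induction m with
  | zero => omega
  | succ n ih =>
    intro _ f hf
    rcases Nat.eq_zero_or_pos n with h0 | hpos
    · subst h0
      simpa using hf 0
    · rw [Fin.sum_univ_castSucc]
      exact wgs_mem_add (ih hpos _ (fun i => hf i.castSucc)) (hf (Fin.last n))

end Aux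

/-- The additive semigroup generated by `{0,1}`-weighted generalized shift
operators on `ℓ²(τ)` is adjoint invariant. -/
theorem wgs_semigroup_adjoint_invariant_zero_one {τ : Type*} [Nonempty τ] :
    ∀ T ∈ WGSSemigroup (τ := τ) ({0, 1} : Set ℂ),
      ContinuousLinearMap.adjoint T ∈ WGSSemigroup (τ := τ) ({0, 1} : Set ℂ) := by
  rintro T ⟨m, S, hm, hS, rfl⟩
  have hsum : ContinuousLinearMap.adjoint (∑ i, S i)
      = ∑ i, ContinuousLinearMap.adjoint (S i) := by
    exact map_sum (ContinuousLinearMap.adjoint :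
      (lp (fun _ : τ => ℂ) 2 →L[ℂ] lp (fun _ : τ => ℂ) 2) ≃ₗᵢ⋆[ℂ] _) S Finset.univ
  rw [hsum]
  exact wgs_sum_mem_s12 m hm _ fun i => wgs_adjoint_single (S i) (hS i)
end

section
/- Let τ be a nonempty index set, φ : τ → τ a self-map, and w : τ → ℂ a weight vector such that σ_{φ,w} maps ℓ²(τ) into ℓ²(τ). If the bounded operator σ_{φ,w}|_{ℓ²(τ)} is self-adjoint, then for every θ ∈ τ: w_θ = 0 whenever φ(φ(θ)) ≠ θ, and w_θ = conj(w_{φ(θ)}) whenever φ(φ(θ)) = θ. -/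
/-!
Self-adjointness of `T` gives `⟪T e_{φ θ}, e_θ⟫ = ⟪e_{φ θ}, T e_θ⟫` for the standard basis
vectors of `ℓ²(τ)`. The left side is `conj (w θ)`, while `T e_θ` is supported on `φ⁻¹ {θ}`, so
the right side is `w (φ θ)` if `φ (φ θ) = θ` and `0` otherwise.
-/

open ComplexConjugate

theorem lp.apply_single_eq_conj_of_isSelfAdjoint {ι 𝕜 : Type*} [RCLike 𝕜] [DecidableEq ι]
    {T : lp (fun _ : ι => 𝕜) 2 →L[𝕜] lp (fun _ : ι => 𝕜) 2} (hT : IsSelfAdjoint T) (i j : ι) :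
    T (lp.single 2 j 1) i = conj (T (lp.single 2 i 1) j) := by
  have h := ContinuousLinearMap.adjoint_inner_left T (lp.single 2 i 1) (lp.single 2 j 1)
  rw [← ContinuousLinearMap.star_eq_adjoint, hT, lp.inner_single_right,
    lp.inner_single_left] at h
  simpa [RCLike.inner_apply] using congrArg conj h

theorem lp.weightedShift_single_apply {ι 𝕜 : Type*} [RCLike 𝕜] [DecidableEq ι] (φ : ι → ι)
    (w : ι → 𝕜) {T : lp (fun _ : ι => 𝕜) 2 → lp (fun _ : ι => 𝕜) 2}
    (hT : ∀ (x : lp (fun _ : ι => 𝕜) 2) (α : ι), T x α = w α * x (φ α)) (a α : ι) :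
    T (lp.single 2 a 1) α = if φ α = a then w α else 0 := by
  rw [hT, lp.single_apply, Pi.single_apply]
  split_ifs <;> simp

theorem weighted_shift_selfAdjoint_necessary_general {τ : Type*} (φ : τ → τ) (w : τ → ℂ)
    (T : lp (fun _ : τ => ℂ) 2 →L[ℂ] lp (fun _ : τ => ℂ) 2)
    (hT : ∀ (x : lp (fun _ : τ => ℂ) 2) (α : τ), T x α = w α * x (φ α))
    (hsa : ContinuousLinearMap.adjoint T = T) :
    ∀ θ : τ, (φ (φ θ) ≠ θ → w θ = 0) ∧ (φ (φ θ) = θ → w θ = (starRingEnd ℂ) (w (φ θ))) := by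
  classical
  intro θ
  have key := lp.apply_single_eq_conj_of_isSelfAdjoint hsa θ (φ θ)
  rw [lp.weightedShift_single_apply φ w hT, lp.weightedShift_single_apply φ w hT,
    if_pos rfl] at key
  refine ⟨fun h => ?_, fun h => ?_⟩
  · rwa [if_neg h, map_zero] at key
  · rwa [if_pos h] at key

/-- If the bounded weighted generalized shift operator `σ_{φ,w}|_{ℓ²(τ)}`
is self-adjoint, then `w_θ = 0` whenever `φ²(θ) ≠ θ`, and `w_θ = conj(w_{φ(θ)})` whenever
`φ²(θ) = θ`. -/
theorem weighted_shift_selfAdjoint_necessary {τ : Type*} [Nonempty τ] (φ : τ → τ) (w : τ → ℂ)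
    (T : lp (fun _ : τ => ℂ) 2 →L[ℂ] lp (fun _ : τ => ℂ) 2)
    (hT : ∀ (x : lp (fun _ : τ => ℂ) 2) (α : τ), T x α = w α * x (φ α))
    (hsa : ContinuousLinearMap.adjoint T = T) :
    ∀ θ : τ, (φ (φ θ) ≠ θ → w θ = 0) ∧ (φ (φ θ) = θ → w θ = (starRingEnd ℂ) (w (φ θ))) :=
  weighted_shift_selfAdjoint_necessary_general φ w T hT hsa
end

section
/- Let τ be a nonempty index set, φ : τ → τ a self-map, and w : τ → ℂ a weight vector such that σ_{φ,w} maps ℓ²(τ) into ℓ²(τ). Suppose that for every θ ∈ τ: w_θ = 0 whenever φ(φ(θ)) ≠ θ, and w_θ = conj(w_{φ(θ)}) whenever φ(φ(θ)) = θ. Then the bounded operator σ_{φ,w}|_{ℓ²(τ)} is self-adjoint. -/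
/-!
The weight vanishes off the set `S` of points of period two of `φ`, so both `⟪T x, y⟫` and
`⟪x, T y⟫` are sums over `S`, on which `φ` is an involution. Reindexing `⟪T x, y⟫` along `φ` and
using `conj (w (φ θ)) = w θ` on `S` turns it term by term into `⟪x, T y⟫`.
-/

open Function

namespace Function

variable {α : Type*} (φ : α → α)

def periodTwoPtsPerm : Equiv.Perm {θ | φ (φ θ) = θ} :=
  Involutive.toPerm (fun θ => ⟨φ θ, congrArg φ θ.2⟩) fun θ => Subtype.ext θ.2

theorem tsum_periodTwoPts_comp {M : Type*} [AddCommMonoid M] [TopologicalSpace M] (f : α → M) :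
    ∑' θ : {θ | φ (φ θ) = θ}, f (φ θ) = ∑' θ : {θ | φ (φ θ) = θ}, f θ :=
  (periodTwoPtsPerm φ).tsum_eq fun θ => f θ

end Function

theorem weighted_shift_selfAdjoint_sufficient_general {τ : Type*} (φ : τ → τ) (w : τ → ℂ)
    (T : lp (fun _ : τ => ℂ) 2 →L[ℂ] lp (fun _ : τ => ℂ) 2)
    (hT : ∀ (x : lp (fun _ : τ => ℂ) 2) (α : τ), T x α = w α * x (φ α))
    (hw : ∀ θ : τ, (φ (φ θ) ≠ θ → w θ = 0) ∧ (φ (φ θ) = θ → w θ = (starRingEnd ℂ) (w (φ θ)))) :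
    ContinuousLinearMap.adjoint T = T := by
  have hS : support w ⊆ {θ | φ (φ θ) = θ} := fun θ hθ => by_contra fun h => hθ ((hw θ).1 h)
  refine ((ContinuousLinearMap.eq_adjoint_iff T T).2 fun x y => ?_).symm
  simp only [lp.inner_eq_tsum, hT, RCLike.inner_apply']
  rw [← tsum_subtype_eq_of_support_subset fun θ hθ => hS fun h => hθ (by simp [h]),
    ← tsum_subtype_eq_of_support_subset fun θ hθ => hS fun h => hθ (by simp [h])]
  refine (tsum_periodTwoPts_comp φ fun θ => starRingEnd ℂ (w θ * x (φ θ)) * y θ).symm.trans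
    (tsum_congr fun ⟨θ, (hθ : φ (φ θ) = θ)⟩ => ?_)
  rw [map_mul, (hw θ).2 hθ, hθ]
  ring

/-- If `w_θ = 0` whenever `φ²(θ) ≠ θ` and `w_θ = conj(w_{φ(θ)})` whenever
`φ²(θ) = θ`, then the bounded weighted generalized shift operator `σ_{φ,w}|_{ℓ²(τ)}` is
self-adjoint. -/
theorem weighted_shift_selfAdjoint_sufficient {τ : Type*} [Nonempty τ] (φ : τ → τ) (w : τ → ℂ)
    (T : lp (fun _ : τ => ℂ) 2 →L[ℂ] lp (fun _ : τ => ℂ) 2)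
    (hT : ∀ (x : lp (fun _ : τ => ℂ) 2) (α : τ), T x α = w α * x (φ α))
    (hw : ∀ θ : τ, (φ (φ θ) ≠ θ → w θ = 0) ∧ (φ (φ θ) = θ → w θ = (starRingEnd ℂ) (w (φ θ)))) :
    ContinuousLinearMap.adjoint T = T :=
  weighted_shift_selfAdjoint_sufficient_general φ w T hT hw
end

section
/- Let τ be a nonempty index set, φ : τ → τ a self-map, and w : τ → ℂ a weight vector such that σ_{φ,w} maps ℓ²(τ) into ℓ²(τ). Then the bounded operator σ_{φ,w}|_{ℓ²(τ)} is unitary (i.e., it is bijective and its adjoint equals its inverse) if and only if φ : τ → τ is bijective and |w_α| = 1 for all α ∈ τ. -/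
open scoped ENNReal InnerProductSpace ComplexConjugate

/-- The bounded weighted generalized shift operator `σ_{φ,w}|_{ℓ²(τ)}` is
unitary (bijective with `T* = T⁻¹`) if and only if `φ` is bijective and `|w_α| = 1` for all
`α ∈ τ`. -/
theorem weighted_shift_unitary_iff {τ : Type*} [Nonempty τ] (φ : τ → τ) (w : τ → ℂ)
    (T : lp (fun _ : τ => ℂ) 2 →L[ℂ] lp (fun _ : τ => ℂ) 2)
    (hT : ∀ (x : lp (fun _ : τ => ℂ) 2) (α : τ), T x α = w α * x (φ α)) :
    (Function.Bijective T ∧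
        (∀ x, ContinuousLinearMap.adjoint T (T x) = x) ∧
        (∀ x, T (ContinuousLinearMap.adjoint T x) = x)) ↔
      (Function.Bijective φ ∧ ∀ α, ‖w α‖ = 1) := by
  classical
  set E := lp (fun _ : τ => ℂ) 2 with hE
  let e : τ → E := fun β => lp.single 2 β (1 : ℂ)
  have he_self : ∀ β, (e β) β = 1 := by
    intro β; simp only [e]
    exact lp.single_apply_self (E := fun _ : τ => ℂ) 2 β 1
  have he_ne : ∀ {β γ}, γ ≠ β → (e β) γ = 0 := by
    intro β γ h; simp only [e]
    exact lp.single_apply_ne (E := fun _ : τ => ℂ) 2 β 1 h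
  constructor
  · rintro ⟨hbij, hL, _hR⟩
    -- all weights are nonzero
    have hw0 : ∀ α, w α ≠ 0 := by
      intro α h0
      obtain ⟨x, hx⟩ := hbij.2 (e α)
      have h1 : (T x) α = (e α) α := by rw [hx]
      rw [hT, he_self, h0, zero_mul] at h1
      exact zero_ne_one h1
    -- φ is injective
    have hφinj : Function.Injective φ := by
      intro a b hab
      by_contra hne
      obtain ⟨x, hx⟩ := hbij.2 (e a)
      have ha : (T x) a = (e a) a := by rw [hx]
      have hb : (T x) b = (e a) b := by rw [hx]
      rw [hT, he_self] at ha
      rw [hT, he_ne (Ne.symm hne)] at hb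
      have hxb : x (φ b) = 0 := by
        rcases mul_eq_zero.1 hb with h | h
        · exact absurd h (hw0 b)
        · exact h
      rw [hab, hxb, mul_zero] at ha
      exact one_ne_zero ha.symm
    -- φ is surjective
    have hφsurj : Function.Surjective φ := by
      intro β
      by_contra hβ
      push_neg at hβ
      have hT0 : T (e β) = 0 := by
        apply lp.ext
        funext α
        have : (e β) (φ α) = 0 := he_ne (hβ α)
        simp [hT, this]
      have h0 : e β = 0 := hbij.1 (by rw [hT0, map_zero])
      have : (e β) β = (0 : E) β := by rw [h0]
      rw [he_self] at this
      simp at this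
    refine ⟨⟨hφinj, hφsurj⟩, ?_⟩
    intro α
    -- T (e (φ α)) = lp.single 2 α (w α)
    have hTe : T (e (φ α)) = lp.single 2 α (w α) := by
      apply lp.ext
      funext γ
      by_cases h : γ = α
      · subst h
        rw [hT, he_self, lp.single_apply_self (E := fun _ : τ => ℂ) 2 γ (w γ)]
        ring
      · have hne : φ γ ≠ φ α := fun hc => h (hφinj hc)
        rw [hT, he_ne hne, lp.single_apply_ne (E := fun _ : τ => ℂ) 2 α (w α) h]
        ring
    have hiso : ⟪T (e (φ α)), T (e (φ α))⟫_ℂ = ⟪e (φ α), e (φ α)⟫_ℂ := by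
      rw [← ContinuousLinearMap.adjoint_inner_left T, hL]
    rw [hTe] at hiso
    rw [lp.inner_single_left, lp.single_apply_self (E := fun _ : τ => ℂ) 2 α (w α),
      RCLike.inner_apply] at hiso
    have h2 : ⟪e (φ α), e (φ α)⟫_ℂ = 1 := by
      show ⟪lp.single 2 (φ α) (1:ℂ), e (φ α)⟫_ℂ = 1
      rw [lp.inner_single_left, he_self]
      simp
    rw [h2] at hiso
    -- hiso : conj (w α) * w α = 1
    have hnorm : ‖w α‖ * ‖w α‖ = 1 := by
      have := congrArg norm hiso
      rwa [norm_mul, RCLike.norm_conj, norm_one] at this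
    rcases mul_self_eq_one_iff.1 hnorm with h | h
    · exact h
    · have h0 : (0:ℝ) ≤ ‖w α‖ := norm_nonneg _
      linarith
  · rintro ⟨hφ, hw⟩
    let ψ := Equiv.ofBijective φ hφ
    have hcw : ∀ α, conj (w α) * w α = 1 := by
      intro α
      rw [mul_comm, Complex.mul_conj', hw α]
      norm_num
    -- T preserves inner products
    have hinner : ∀ x y : E, ⟪T x, T y⟫_ℂ = ⟪x, y⟫_ℂ := by
      intro x y
      rw [lp.inner_eq_tsum, lp.inner_eq_tsum]
      have hc : ∀ α, ⟪(T x) α, (T y) α⟫_ℂ = ⟪x (φ α), y (φ α)⟫_ℂ := by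
        intro α
        rw [hT, hT, RCLike.inner_apply, RCLike.inner_apply]
        calc w α * y (φ α) * conj (w α * x (φ α))
            = (conj (w α) * w α) * (conj (x (φ α)) * y (φ α)) := by
              rw [map_mul]; ring
          _ = y (φ α) * conj (x (φ α)) := by rw [hcw α, one_mul, mul_comm]
      rw [tsum_congr hc]
      exact ψ.tsum_eq fun β => ⟪x β, y β⟫_ℂ
    -- T is surjective
    have hsurj : Function.Surjective T := by
      intro y
      have hmem : Memℓp (fun β => conj (w (ψ.symm β)) * y (ψ.symm β)) 2 := by
        apply memℓp_gen
        have hy : Summable fun α => ‖y α‖ ^ (2:ℝ≥0∞).toReal :=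
          (lp.memℓp y).summable (by norm_num)
        have hfun : (fun β => ‖conj (w (ψ.symm β)) * y (ψ.symm β)‖ ^ (2:ℝ≥0∞).toReal)
            = (fun α => ‖y α‖ ^ (2:ℝ≥0∞).toReal) ∘ ψ.symm := by
          funext β
          simp [norm_mul, RCLike.norm_conj, hw]
        rw [hfun]
        exact (ψ.symm.summable_iff).2 hy
      refine ⟨⟨_, hmem⟩, ?_⟩
      apply lp.ext
      funext α
      rw [hT]
      show w α * (conj (w (ψ.symm (φ α))) * y (ψ.symm (φ α))) = y α
      have hψ : ψ.symm (φ α) = α := ψ.symm_apply_apply α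
      rw [hψ, ← mul_assoc, mul_comm (w α), hcw α, one_mul]
    have hL : ∀ x, ContinuousLinearMap.adjoint T (T x) = x := by
      intro x
      refine ext_inner_left ℂ fun v => ?_
      rw [ContinuousLinearMap.adjoint_inner_right]
      exact hinner v x
    have hinj : Function.Injective T := fun a b hab => by rw [← hL a, hab, hL b]
    have hR : ∀ x, T (ContinuousLinearMap.adjoint T x) = x := by
      intro x
      obtain ⟨z, rfl⟩ := hsurj x
      rw [hL]
    exact ⟨⟨hinj, hsurj⟩, hL, hR⟩
end
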